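/- arXiv:1501.07771 — 4 statements merged into one kernel-verified Lean document; each statement's English description precedes it below -/
import Mathlib

section
/- A number ρ_0 ∈ ℂ is an eigenvalue of the boundary value problem B — i.e., there exists a not identically zero solution with jumps y of the pencil equation at ρ = ρ_0 satisfying y(0) = α y(T) and y'(0) − (iρ_0 h' + h) y(0) = β y'(T) (values at 0 and T understood as the one-sided limits y(0+0), y(T−0), etc.) — if and only if a(ρ_0) = 0, where a(ρ) = α φ(T,ρ) + β S'(T,ρ) − (1 + αβ) is the characteristic function. -/
open MeasureTheory Set Filter Complex intervalIntegral
open scoped Topology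

noncomputable section

/-- `y` (with derivative `y'`) solves the pencil equation
`y'' + (ρ² + ρ p x + q x) y = 0` on the open interval `(c, d)`:
`y` is differentiable with derivative `y'` there, and `y'` is absolutely continuous
with `y'' = -(ρ² + ρ p + q) y` almost everywhere, which is encoded by the
integral equation for `y'`. -/
def PencilSolOn (p q : ℝ → ℂ) (ρ : ℂ) (y y' : ℝ → ℂ) (c d : ℝ) : Prop :=
  (∀ x ∈ Set.Ioo c d, HasDerivAt y (y' x) x) ∧
  (∀ u ∈ Set.Ioo c d, ∀ v ∈ Set.Ioo c d,
    y' v - y' u = ∫ t in u..v, -((ρ ^ 2 + ρ * p t + q t) * y t))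

/-- A solution with jumps of the pencil equation on `[b 0, b N]`, together with its
one-sided limits at the nodes `b j`.  The fields `yL j, yL' j` (resp. `yR j, yR' j`)
are the one-sided limits `y (b j - 0), y' (b j - 0)` (resp. `y (b j + 0), y' (b j + 0)`).
The values of `y, y'` at the endpoints `b 0` and `b N` are understood as the
corresponding one-sided limits, and the jump conditions hold at the interior nodes
`b 1, …, b (N-1)`. -/
structure JumpSolution (N : ℕ) (b : ℕ → ℝ) (p q : ℝ → ℂ)
    (γ η' η : ℕ → ℂ) (ρ : ℂ) where
  y : ℝ → ℂ
  y' : ℝ → ℂ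
  yL : ℕ → ℂ
  yL' : ℕ → ℂ
  yR : ℕ → ℂ
  yR' : ℕ → ℂ
  solves : ∀ j, 1 ≤ j → j ≤ N →
    PencilSolOn p q ρ y y' (b (j - 1)) (b j)
  limL : ∀ j, 1 ≤ j → j ≤ N →
    Filter.Tendsto y (nhdsWithin (b j) (Set.Iio (b j))) (nhds (yL j)) ∧
    Filter.Tendsto y' (nhdsWithin (b j) (Set.Iio (b j))) (nhds (yL' j))
  limR : ∀ j, j + 1 ≤ N →
    Filter.Tendsto y (nhdsWithin (b j) (Set.Ioi (b j))) (nhds (yR j)) ∧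
    Filter.Tendsto y' (nhdsWithin (b j) (Set.Ioi (b j))) (nhds (yR' j))
  jump : ∀ j, 1 ≤ j → j + 1 ≤ N →
    yR j = γ j * yL j ∧
    yR' j = (γ j)⁻¹ * yL' j + (Complex.I * ρ * η' j + η j) * yL j
  left_end : y (b 0) = yR 0 ∧ y' (b 0) = yR' 0
  right_end : y (b N) = yL N ∧ y' (b N) = yL' N

/-- `p` is absolutely continuous on `[a, b]`. -/
def AbsCont (p : ℝ → ℂ) (a b : ℝ) : Prop :=
  ∃ p' : ℝ → ℂ, MeasureTheory.IntegrableOn p' (Set.Icc a b) ∧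
    ∀ x ∈ Set.Icc a b, p x = p a + ∫ t in a..x, p' t

/-!
On each interval `(b_{j-1}, b_j)` the pencil equation is `y'' = r y` with an integrable
coefficient `r`. There a solution vanishes as soon as its right limits `y(b_{j-1}+0)` and
`y'(b_{j-1}+0)` do (an integral Gronwall argument), and the Wronskian of two solutions is
constant (integration by parts). The jump conditions act linearly on `(y, y')` and, since
`γ_j · γ_j⁻¹ = 1`, preserve the Wronskian. Hence every solution with jumps equals
`y(0) C + y'(0) S`, and `C(T) S'(T) - S(T) C'(T) = 1`. The boundary conditions become a
`2 × 2` linear system for `(y(0), y'(0))`, whose determinant is `-a(ρ₀)` by this Wronskian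
identity, and a nontrivial solution exists exactly when the determinant vanishes.
-/

open scoped Matrix

section Calculus

variable {𝕜 : Type*} [RCLike 𝕜]

theorem integral_deriv_mul_primitive {f f' h : ℝ → 𝕜} {u v : ℝ} (huv : u ≤ v)
    (hf : ∀ t ∈ Icc u v, HasDerivAt f (f' t) t) (hf' : ContinuousOn f' (Icc u v))
    (hh : IntegrableOn h (Icc u v)) :
    ∫ t in u..v, f' t * ∫ s in u..t, h s =
      f v * (∫ s in u..v, h s) - ∫ s in u..v, f s * h s := by
  -- Fubini on the triangle `u < s ≤ t ≤ v`.
  set μ := volume.restrict (Ioc u v)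
  set K : ℝ → ℝ → 𝕜 := fun t s => if s ≤ t then f' t * h s else 0
  have hh' : IntegrableOn h (Ioc u v) := hh.mono_set Ioc_subset_Icc_self
  have hK : Integrable (Function.uncurry K) (μ.prod μ) := by
    refine (((hf'.integrableOn_Icc.mono_set Ioc_subset_Icc_self).mul_prod hh').indicator
      (isClosed_le continuous_snd continuous_fst).measurableSet).congr
      (Eventually.of_forall fun z => ?_)
    simp [K, indicator_apply, Function.uncurry]
  have hK_left : ∀ t ∈ Ioc u v, ∫ s, K t s ∂μ = f' t * ∫ s in u..t, h s := by
    intro t ht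
    have : K t = (Iic t).indicator fun s => f' t * h s := by
      funext s; simp [K, indicator_apply]
    rw [this, MeasureTheory.integral_indicator measurableSet_Iic,
      Measure.restrict_restrict measurableSet_Iic, Iic_inter_Ioc_of_le ht.2,
      MeasureTheory.integral_const_mul, intervalIntegral.integral_of_le ht.1.le]
  have hK_right : ∀ s ∈ Ioc u v, ∫ t, K t s ∂μ = (f v - f s) * h s := by
    intro s hs
    have : (fun t => K t s) = (Ici s).indicator fun t => f' t * h s := by
      funext t; simp [K, indicator_apply]
    have hsub : Icc s v ⊆ Icc u v := Icc_subset_Icc_left hs.1.le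
    have hIci : Ici s ∩ Ioc u v = Icc s v := by
      ext t; simp only [mem_inter_iff, mem_Ici, mem_Ioc, mem_Icc]; grind
    rw [this, MeasureTheory.integral_indicator measurableSet_Ici,
      Measure.restrict_restrict measurableSet_Ici, hIci, integral_Icc_eq_integral_Ioc,
      MeasureTheory.integral_mul_const, ← intervalIntegral.integral_of_le hs.2,
      intervalIntegral.integral_eq_sub_of_hasDerivAt
        (fun t ht => hf t (hsub (by rwa [uIcc_of_le hs.2] at ht)))
        ((hf'.mono (by rw [uIcc_of_le hs.2]; exact hsub)).intervalIntegrable)]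
  have hfh : IntegrableOn (fun s => f s * h s) (Ioc u v) :=
    (hh.continuousOn_mul (fun t ht => (hf t ht).continuousAt.continuousWithinAt)
      isCompact_Icc).mono_set Ioc_subset_Icc_self
  calc ∫ t in u..v, f' t * ∫ s in u..t, h s = ∫ t, ∫ s, K t s ∂μ ∂μ := by
        rw [intervalIntegral.integral_of_le huv]
        exact (setIntegral_congr_fun measurableSet_Ioc hK_left).symm
    _ = ∫ s, ∫ t, K t s ∂μ ∂μ := integral_integral_swap hK
    _ = ∫ s in Ioc u v, (f v * h s - f s * h s) := by
        refine setIntegral_congr_fun measurableSet_Ioc fun s hs => ?_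
        rw [hK_right s hs, sub_mul]
    _ = _ := by
        rw [intervalIntegral.integral_of_le huv, intervalIntegral.integral_of_le huv,
          integral_sub (hh'.const_mul _) hfh, MeasureTheory.integral_const_mul]

theorem integral_deriv_mul_eq_sub_of_primitive {f f' g h : ℝ → 𝕜} {u v : ℝ} (huv : u ≤ v)
    (hf : ∀ t ∈ Icc u v, HasDerivAt f (f' t) t) (hf' : ContinuousOn f' (Icc u v))
    (hh : IntegrableOn h (Icc u v)) (hg : ∀ t ∈ Icc u v, g t = g u + ∫ s in u..t, h s) :
    ∫ t in u..v, (f' t * g t + f t * h t) = f v * g v - f u * g u := by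
  have hI : uIcc u v = Icc u v := uIcc_of_le huv
  have hH : ContinuousOn (fun t => ∫ s in u..t, h s) (Icc u v) := by
    rw [← hI]; exact intervalIntegral.continuousOn_primitive_interval (hI ▸ hh)
  have hf'I : IntervalIntegrable f' volume u v := (hI ▸ hf').intervalIntegrable
  have hfH : IntervalIntegrable (fun t => f' t * ∫ s in u..t, h s) volume u v :=
    (hI ▸ hf'.mul hH).intervalIntegrable
  have hfh : IntervalIntegrable (fun t => f t * h t) volume u v :=
    (hI ▸ hh.continuousOn_mul (fun t ht => (hf t ht).continuousAt.continuousWithinAt)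
      isCompact_Icc).intervalIntegrable
  have hftc : ∫ t in u..v, f' t = f v - f u :=
    intervalIntegral.integral_eq_sub_of_hasDerivAt (fun t ht => hf t (hI ▸ ht)) hf'I
  calc ∫ t in u..v, (f' t * g t + f t * h t)
      = ∫ t in u..v, (g u * f' t + (f' t * (∫ s in u..t, h s) + f t * h t)) :=
        intervalIntegral.integral_congr fun t ht => by rw [hg t (hI ▸ ht)]; ring
    _ = f v * g v - f u * g u := by
        rw [intervalIntegral.integral_add (hf'I.const_mul _) (hfH.add hfh),
          intervalIntegral.integral_add hfH hfh, intervalIntegral.integral_const_mul, hftc,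
          integral_deriv_mul_primitive huv hf hf' hh, hg v ⟨huv, le_rfl⟩]
        ring

end Calculus

section Gronwall

variable {F g : ℝ → ℝ}

theorem bddAbove_image_Ioc_of_tendsto {c e L : ℝ} (hF : ContinuousOn F (Ioc c e))
    (hlim : Tendsto F (𝓝[>] c) (𝓝 L)) : BddAbove (F '' Ioc c e) := by
  obtain ⟨u, hcu, hu⟩ := mem_nhdsGT_iff_exists_Ioc_subset.1
    (hlim.eventually (gt_mem_nhds (lt_add_one L)))
  have hsplit : Ioc c e ⊆ Ioc c u ∪ Icc u e := fun t ht =>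
    (le_total t u).elim (fun h => .inl ⟨ht.1, h⟩) fun h => .inr ⟨h, ht.2⟩
  refine ((BddAbove.union (s := F '' Ioc c u) ⟨L + 1, ?_⟩ (isCompact_Icc.bddAbove_image
    (hF.mono fun t ht => ⟨lt_of_lt_of_le hcu ht.1, ht.2⟩))).mono ?_)
  · rintro _ ⟨t, ht, rfl⟩; exact (hu ht).le
  · rw [← image_union]; exact image_mono hsplit

theorem eqOn_zero_of_le_integral_mul_of_integral_lt_one {x w : ℝ} (hg0 : ∀ t, 0 ≤ g t)
    (hF0 : ∀ t, 0 ≤ F t) (hg : IntegrableOn g (Ioc x w))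
    (hgF : IntegrableOn (fun t => g t * F t) (Ioc x w)) (hbdd : BddAbove (F '' Ioc x w))
    (hlt : ∫ t in Ioc x w, g t < 1) (hF : ∀ v ∈ Ioc x w, F v ≤ ∫ t in Ioc x v, g t * F t) :
    ∀ v ∈ Ioc x w, F v = 0 := by
  set M := sSup (F '' Ioc x w)
  have hFM : ∀ v ∈ Ioc x w, F v ≤ M := fun v hv => le_csSup hbdd (mem_image_of_mem F hv)
  have hG0 : 0 ≤ ∫ t in Ioc x w, g t := setIntegral_nonneg measurableSet_Ioc fun t _ => hg0 t
  have hM0 : 0 ≤ M := Real.sSup_nonneg (by rintro _ ⟨t, -, rfl⟩; exact hF0 t)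
  have hFMG : ∀ v ∈ Ioc x w, F v ≤ M * ∫ t in Ioc x w, g t := by
    intro v hv
    have hsub : Ioc x v ⊆ Ioc x w := Ioc_subset_Ioc_right hv.2
    calc F v ≤ ∫ t in Ioc x v, g t * F t := hF v hv
      _ ≤ ∫ t in Ioc x v, g t * M :=
          setIntegral_mono_on (hgF.mono_set hsub) ((hg.mono_set hsub).mul_const M)
            measurableSet_Ioc fun t ht =>
              mul_le_mul_of_nonneg_left (hFM t (hsub ht)) (hg0 t)
      _ ≤ ∫ t in Ioc x w, g t * M :=
          setIntegral_mono_set (hg.mul_const M)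
            (Eventually.of_forall fun t => mul_nonneg (hg0 t) hM0) hsub.eventuallyLE
      _ = M * ∫ t in Ioc x w, g t := by rw [MeasureTheory.integral_mul_const, mul_comm]
  have hMM : M ≤ M * ∫ t in Ioc x w, g t :=
    Real.sSup_le (by rintro _ ⟨v, hv, rfl⟩; exact hFMG v hv) (mul_nonneg hM0 hG0)
  have hM : M ≤ 0 := by nlinarith
  exact fun v hv => le_antisymm ((hFM v hv).trans hM) (hF0 v)

theorem eqOn_zero_of_le_integral_mul {c e : ℝ} (hg0 : ∀ t, 0 ≤ g t) (hF0 : ∀ t, 0 ≤ F t)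
    (hg : IntegrableOn g (Ioc c e)) (hgF : IntegrableOn (fun t => g t * F t) (Ioc c e))
    (hbdd : BddAbove (F '' Ioc c e)) (hF : ∀ v ∈ Ioc c e, F v ≤ ∫ t in Ioc c v, g t * F t) :
    ∀ v ∈ Ioc c e, F v = 0 := by
  -- Continuous induction on the closed set where `H` vanishes: past each of its points `x`,
  -- `F = 0` on a short interval `(x, w]` with `∫_{(x, w]} g < 1`.
  set H : ℝ → ℝ := fun w => ∫ t in Ioc c w, g t * F t
  have hH_add : ∀ {x w}, c ≤ x → x ≤ w → w ≤ e → H w = H x + ∫ t in Ioc x w, g t * F t :=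
    fun hcx hxw hwe => by
      simp only [H]
      rw [← Ioc_union_Ioc_eq_Ioc hcx hxw, setIntegral_union (Ioc_disjoint_Ioc_of_le le_rfl)
        measurableSet_Ioc (hgF.mono_set (Ioc_subset_Ioc_right (hxw.trans hwe)))
        (hgF.mono_set (Ioc_subset_Ioc hcx hwe))]
  suffices hzero : Icc c e ⊆ H ⁻¹' {0} from fun v hv =>
    le_antisymm ((hF v hv).trans_eq (hzero (Ioc_subset_Icc_self hv))) (hF0 v)
  refine IsClosed.Icc_subset_of_forall_exists_gt ?_ (by simp [H]) ?_
  · rw [inter_comm]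
    exact (intervalIntegral.continuousOn_primitive
      ((integrableOn_Icc_iff_integrableOn_Ioc).2 hgF)).preimage_isClosed_of_isClosed
      isClosed_Icc isClosed_singleton
  rintro x ⟨hHx, hcx, hxe⟩ y hxy
  have hG : Tendsto (fun w => ∫ t in Ioc x w, g t) (𝓝[>] x) (𝓝 0) := by
    have := (intervalIntegral.continuousOn_primitive ((integrableOn_Icc_iff_integrableOn_Ioc).2
      (hg.mono_set (Ioc_subset_Ioc_left hcx)))).continuousWithinAt (left_mem_Icc.2 hxe.le)
    rw [← nhdsWithin_Ioc_eq_nhdsGT hxe]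
    simpa using (this.mono Ioc_subset_Icc_self).tendsto
  obtain ⟨w, hw1, hxw, hwy⟩ := ((hG.eventually (gt_mem_nhds one_pos)).and
    (Ioc_mem_nhdsGT (lt_min hxy hxe))).exists
  have hwe : w ≤ e := hwy.trans (min_le_right _ _)
  have hFw : ∀ v ∈ Ioc x w, F v = 0 := by
    refine eqOn_zero_of_le_integral_mul_of_integral_lt_one hg0 hF0
      (hg.mono_set (Ioc_subset_Ioc hcx hwe)) (hgF.mono_set (Ioc_subset_Ioc hcx hwe))
      (hbdd.mono (image_mono (Ioc_subset_Ioc hcx hwe))) hw1 fun v hv => ?_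
    have := hF v ⟨hcx.trans_lt hv.1, hv.2.trans hwe⟩
    rwa [show ∫ t in Ioc c v, g t * F t = H v from rfl, hH_add hcx hv.1.le (hv.2.trans hwe),
      show H x = 0 from hHx, zero_add] at this
  refine ⟨w, ?_, hxw, hwy.trans (min_le_left _ _)⟩
  show H w = 0
  rw [hH_add hcx hxw.le hwe, show H x = 0 from hHx, zero_add]
  exact setIntegral_eq_zero_of_forall_eq_zero fun t ht => by rw [hFw t ht, mul_zero]

end Gronwall

section LinearODE

variable {𝕜 : Type*} [RCLike 𝕜]

/-- `y'' = r y` on `(c, d)`, in the integrated form of `PencilSolOn`. -/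
def LinearODESolOn (r y y' : ℝ → 𝕜) (c d : ℝ) : Prop :=
  (∀ x ∈ Ioo c d, HasDerivAt y (y' x) x) ∧
  ∀ u ∈ Ioo c d, ∀ v ∈ Ioo c d, y' v - y' u = ∫ t in u..v, r t * y t

namespace LinearODESolOn

variable {r y y' z z' : ℝ → 𝕜} {c d : ℝ}

theorem continuousOn (hy : LinearODESolOn r y y' c d) : ContinuousOn y (Ioo c d) :=
  fun x hx => (hy.1 x hx).continuousAt.continuousWithinAt

theorem integrableOn_mul (hr : IntegrableOn r (Icc c d)) (hy : LinearODESolOn r y y' c d)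
    {K : Set ℝ} (hK : IsCompact K) (hKcd : K ⊆ Ioo c d) :
    IntegrableOn (fun t => r t * y t) K :=
  (hr.mono_set (hKcd.trans Ioo_subset_Icc_self)).mul_continuousOn (hy.continuousOn.mono hKcd) hK

theorem continuousOn_deriv (hr : IntegrableOn r (Icc c d)) (hy : LinearODESolOn r y y' c d) :
    ContinuousOn y' (Ioo c d) := by
  intro x hx
  obtain ⟨a, hca, hax⟩ := exists_between hx.1
  obtain ⟨a', hxa', ha'd⟩ := exists_between hx.2
  have hsub : Icc a a' ⊆ Ioo c d := Icc_subset_Ioo hca ha'd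
  have hI : uIcc a a' = Icc a a' := uIcc_of_le (hax.trans hxa').le
  have hprim := intervalIntegral.continuousOn_primitive_interval
    (hy.integrableOn_mul hr isCompact_uIcc (hI ▸ hsub))
  rw [hI] at hprim
  refine (((continuousOn_const (c := y' a)).add hprim).congr fun w hw => ?_).continuousAt
    (Icc_mem_nhds hax hxa') |>.continuousWithinAt
  exact eq_add_of_sub_eq' (hy.2 a (hsub (left_mem_Icc.2 (hax.trans hxa').le)) w (hsub hw))

theorem sub_eq_integral_deriv (hr : IntegrableOn r (Icc c d)) (hy : LinearODESolOn r y y' c d)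
    {u v : ℝ} (hu : u ∈ Ioo c d) (hv : v ∈ Ioo c d) : y v - y u = ∫ t in u..v, y' t := by
  have hsub := ordConnected_Ioo.uIcc_subset hu hv
  exact (intervalIntegral.integral_eq_sub_of_hasDerivAt (fun t ht => hy.1 t (hsub ht))
    ((hy.continuousOn_deriv hr).mono hsub).intervalIntegrable).symm

theorem const_mul (a : 𝕜) (hy : LinearODESolOn r y y' c d) :
    LinearODESolOn r (fun x => a * y x) (fun x => a * y' x) c d := by
  refine ⟨fun x hx => (hy.1 x hx).const_mul a, fun u hu v hv => ?_⟩
  rw [← mul_sub, hy.2 u hu v hv, ← intervalIntegral.integral_const_mul]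
  simp_rw [mul_left_comm]

theorem add (hr : IntegrableOn r (Icc c d)) (hy : LinearODESolOn r y y' c d)
    (hz : LinearODESolOn r z z' c d) :
    LinearODESolOn r (fun x => y x + z x) (fun x => y' x + z' x) c d := by
  refine ⟨fun x hx => (hy.1 x hx).add (hz.1 x hx), fun u hu v hv => ?_⟩
  have hsub := ordConnected_Ioo.uIcc_subset hu hv
  rw [add_sub_add_comm, hy.2 u hu v hv, hz.2 u hu v hv, ← intervalIntegral.integral_add
    (hy.integrableOn_mul hr isCompact_uIcc hsub).intervalIntegrable
    (hz.integrableOn_mul hr isCompact_uIcc hsub).intervalIntegrable]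
  simp_rw [mul_add]

theorem wronskian_eq (hr : IntegrableOn r (Icc c d)) (hy : LinearODESolOn r y y' c d)
    (hz : LinearODESolOn r z z' c d) {u v : ℝ} (hu : u ∈ Ioo c d) (hv : v ∈ Ioo c d) :
    y v * z' v - z v * y' v = y u * z' u - z u * y' u := by
  wlog huv : u ≤ v generalizing u v
  · exact (this hv hu (le_of_not_ge huv)).symm
  have hsub : Icc u v ⊆ Ioo c d := Icc_subset_Ioo hu.1 hv.2
  have product_rule : ∀ {f f' g g' : ℝ → 𝕜}, LinearODESolOn r f f' c d →
      LinearODESolOn r g g' c d →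
      ∫ t in u..v, (f' t * g' t + f t * (r t * g t)) = f v * g' v - f u * g' u :=
    fun hf hg => integral_deriv_mul_eq_sub_of_primitive huv (fun t ht => hf.1 t (hsub ht))
      ((hf.continuousOn_deriv hr).mono hsub) (hg.integrableOn_mul hr isCompact_Icc hsub)
      fun t ht => (eq_add_of_sub_eq' (hg.2 u hu t (hsub ht)))
  have hyz := product_rule hy hz
  rw [intervalIntegral.integral_congr (g := fun t => z' t * y' t + z t * (r t * y t))
    fun t _ => by ring, product_rule hz hy] at hyz
  linear_combination -hyz

theorem norm_add_norm_le (hr : IntegrableOn r (Icc c d)) (hy : LinearODESolOn r y y' c d)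
    {u v : ℝ} (hu : u ∈ Ioo c d) (hv : v ∈ Ioo c d) (huv : u ≤ v) :
    ‖y v‖ + ‖y' v‖ ≤
      ‖y u‖ + ‖y' u‖ + ∫ t in Ioc u v, (1 + ‖r t‖) * (‖y t‖ + ‖y' t‖) := by
  have hsub : Icc u v ⊆ Ioo c d := Icc_subset_Ioo hu.1 hv.2
  have hyc := hy.continuousOn.mono hsub
  have hy'c := (hy.continuousOn_deriv hr).mono hsub
  have hr' : IntegrableOn r (Icc u v) := hr.mono_set (hsub.trans Ioo_subset_Icc_self)
  have i1 : IntegrableOn (fun t => ‖y' t‖) (Ioc u v) :=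
    hy'c.norm.integrableOn_Icc.mono_set Ioc_subset_Icc_self
  have i2 : IntegrableOn (fun t => ‖r t‖ * ‖y t‖) (Ioc u v) :=
    (IntegrableOn.mul_continuousOn hr'.norm hyc.norm isCompact_Icc).mono_set Ioc_subset_Icc_self
  have i3 : IntegrableOn (fun t => (1 + ‖r t‖) * (‖y t‖ + ‖y' t‖)) (Ioc u v) :=
    (IntegrableOn.mul_continuousOn ((integrableOn_const measure_Icc_lt_top.ne).add hr'.norm)
      (hyc.norm.add hy'c.norm) isCompact_Icc).mono_set Ioc_subset_Icc_self
  have e1 : ‖y v - y u‖ ≤ ∫ t in Ioc u v, ‖y' t‖ := by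
    rw [hy.sub_eq_integral_deriv hr hu hv, intervalIntegral.integral_of_le huv]
    exact norm_integral_le_integral_norm _
  have e2 : ‖y' v - y' u‖ ≤ ∫ t in Ioc u v, ‖r t‖ * ‖y t‖ := by
    rw [hy.2 u hu v hv, intervalIntegral.integral_of_le huv]
    simpa only [norm_mul] using norm_integral_le_integral_norm (fun t => r t * y t)
  have e3 : (∫ t in Ioc u v, ‖y' t‖) + ∫ t in Ioc u v, ‖r t‖ * ‖y t‖ ≤
      ∫ t in Ioc u v, (1 + ‖r t‖) * (‖y t‖ + ‖y' t‖) := by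
    rw [← integral_add i1 i2]
    refine setIntegral_mono_on (i1.add i2) i3 measurableSet_Ioc fun t _ => ?_
    nlinarith [norm_nonneg (r t), norm_nonneg (y t), norm_nonneg (y' t)]
  linarith [norm_le_norm_add_norm_sub' (y v) (y u), norm_le_norm_add_norm_sub' (y' v) (y' u)]

theorem eqOn_zero_of_tendsto (hr : IntegrableOn r (Icc c d)) (hy : LinearODESolOn r y y' c d)
    (h0 : Tendsto y (𝓝[>] c) (𝓝 0)) (h0' : Tendsto y' (𝓝[>] c) (𝓝 0)) :
    ∀ x ∈ Ioo c d, y x = 0 ∧ y' x = 0 := by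
  intro e he
  set F : ℝ → ℝ := fun t => ‖y t‖ + ‖y' t‖
  set g : ℝ → ℝ := fun t => 1 + ‖r t‖
  have hsub : Ioc c e ⊆ Ioo c d := fun t ht => ⟨ht.1, ht.2.trans_lt he.2⟩
  have hFc : ContinuousOn F (Ioc c e) :=
    (hy.continuousOn.norm.add (hy.continuousOn_deriv hr).norm).mono hsub
  have hFlim : Tendsto F (𝓝[>] c) (𝓝 0) := by simpa using h0.norm.add h0'.norm
  have hbdd := bddAbove_image_Ioc_of_tendsto hFc hFlim
  have hg : IntegrableOn g (Ioc c e) :=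
    ((integrableOn_const measure_Icc_lt_top.ne).add hr.norm).mono_set
      (hsub.trans Ioo_subset_Icc_self)
  have hgF : IntegrableOn (fun t => g t * F t) (Ioc c e) := by
    obtain ⟨M, hM⟩ := hbdd
    refine hg.mul_bdd (c := M) (hFc.aestronglyMeasurable measurableSet_Ioc)
      ((ae_restrict_iff' measurableSet_Ioc).2 (Eventually.of_forall fun t ht => ?_))
    rw [Real.norm_of_nonneg (by positivity)]
    exact hM (mem_image_of_mem F ht)
  have hF : ∀ v ∈ Ioc c e, F v ≤ ∫ t in Ioc c v, g t * F t := by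
    intro v hv
    have hFu : ∀ u ∈ Ioc c v, F v ≤ F u + ∫ t in Ioc c v, g t * F t := fun u hu =>
      (hy.norm_add_norm_le hr (hsub ⟨hu.1, hu.2.trans hv.2⟩) (hsub hv) hu.2).trans
        (add_le_add le_rfl (setIntegral_mono_set (hgF.mono_set (Ioc_subset_Ioc_right hv.2))
          (Eventually.of_forall fun t => by positivity)
          (Ioc_subset_Ioc_left hu.1.le).eventuallyLE))
    simpa using ge_of_tendsto (hFlim.add_const _)
      (eventually_of_mem (Ioc_mem_nhdsGT hv.1) hFu)
  have hFe := eqOn_zero_of_le_integral_mul (fun t => by positivity) (fun t => by positivity)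
    hg hgF hbdd hF e ⟨he.1, le_rfl⟩
  constructor <;> apply norm_eq_zero.1 <;>
    linarith [norm_nonneg (y e), norm_nonneg (y' e), show F e = ‖y e‖ + ‖y' e‖ from rfl]

end LinearODESolOn

end LinearODE

theorem eq_of_tendsto_nhdsLT_of_eqOn_Ioo {E : Type*} [TopologicalSpace E] [T2Space E]
    {f : ℝ → E} {a b : ℝ} {C L : E} (hab : a < b) (hf : ∀ x ∈ Ioo a b, f x = C)
    (h : Tendsto f (𝓝[<] b) (𝓝 L)) : L = C :=
  tendsto_nhds_unique h (tendsto_const_nhds.congr'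
    (eventually_of_mem (Ioo_mem_nhdsLT hab) fun x hx => (hf x hx).symm))

theorem eq_of_tendsto_nhdsGT_of_eqOn_Ioo {E : Type*} [TopologicalSpace E] [T2Space E]
    {f : ℝ → E} {a b : ℝ} {C L : E} (hab : a < b) (hf : ∀ x ∈ Ioo a b, f x = C)
    (h : Tendsto f (𝓝[>] a) (𝓝 L)) : L = C :=
  tendsto_nhds_unique h (tendsto_const_nhds.congr'
    (eventually_of_mem (Ioo_mem_nhdsGT hab) fun x hx => (hf x hx).symm))

theorem exists_mem_Ioo_of_mem_Icc_of_ne {b : ℕ → ℝ} {N : ℕ} {x : ℝ} (hx : x ∈ Icc (b 0) (b N))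
    (hne : ∀ j ≤ N, x ≠ b j) : ∃ j < N, x ∈ Ioo (b j) (b (j + 1)) := by
  induction N with
  | zero => exact absurd (le_antisymm hx.2 hx.1) (hne 0 le_rfl)
  | succ n ih =>
    rcases le_or_gt x (b n) with h | h
    · obtain ⟨j, hj, hjx⟩ := ih ⟨hx.1, h⟩ fun j hj => hne j (by omega)
      exact ⟨j, by omega, hjx⟩
    · exact ⟨n, by omega, h, lt_of_le_of_ne hx.2 (hne (n + 1) le_rfl)⟩

def pencilCoeff (p q : ℝ → ℂ) (ρ : ℂ) (t : ℝ) : ℂ := -(ρ ^ 2 + ρ * p t + q t)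

theorem pencilSolOn_iff {p q : ℝ → ℂ} {ρ : ℂ} {y y' : ℝ → ℂ} {c d : ℝ} :
    PencilSolOn p q ρ y y' c d ↔ LinearODESolOn (pencilCoeff p q ρ) y y' c d := by
  simp only [PencilSolOn, LinearODESolOn, pencilCoeff, neg_mul]

theorem AbsCont.continuousOn {p : ℝ → ℂ} {a b : ℝ} (hp : AbsCont p a b) :
    ContinuousOn p (Icc a b) := by
  obtain ⟨p', hp', hpeq⟩ := hp
  refine ((continuousOn_const (c := p a)).add
    (intervalIntegral.continuousOn_primitive hp')).congr fun x hx => ?_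
  rw [hpeq x hx, intervalIntegral.integral_of_le hx.1, Pi.add_apply]

theorem integrableOn_pencilCoeff {p q : ℝ → ℂ} {a b : ℝ} (hp : AbsCont p a b)
    (hq : IntegrableOn q (Icc a b)) (ρ : ℂ) : IntegrableOn (pencilCoeff p q ρ) (Icc a b) :=
  (((integrableOn_const measure_Icc_lt_top.ne).add
    (hp.continuousOn.integrableOn_Icc.const_mul ρ)).add hq).neg

namespace JumpSolution

variable {N : ℕ} {b : ℕ → ℝ} {p q : ℝ → ℂ} {γ η' η : ℕ → ℂ} {ρ : ℂ}

theorem solvesOn (Y : JumpSolution N b p q γ η' η ρ) {j : ℕ} (hj : j < N) :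
    LinearODESolOn (pencilCoeff p q ρ) Y.y Y.y' (b j) (b (j + 1)) :=
  pencilSolOn_iff.1 (Y.solves (j + 1) (by omega) hj)

def linComb (hr : ∀ j < N, IntegrableOn (pencilCoeff p q ρ) (Icc (b j) (b (j + 1))))
    (A : ℂ) (Y : JumpSolution N b p q γ η' η ρ) (B : ℂ) (Z : JumpSolution N b p q γ η' η ρ) :
    JumpSolution N b p q γ η' η ρ where
  y x := A * Y.y x + B * Z.y x
  y' x := A * Y.y' x + B * Z.y' x
  yL j := A * Y.yL j + B * Z.yL j
  yL' j := A * Y.yL' j + B * Z.yL' j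
  yR j := A * Y.yR j + B * Z.yR j
  yR' j := A * Y.yR' j + B * Z.yR' j
  solves j hj1 hjN := by
    obtain ⟨i, rfl⟩ : ∃ i, j = i + 1 := ⟨j - 1, by omega⟩
    exact pencilSolOn_iff.2
      (((Y.solvesOn hjN).const_mul A).add (hr i hjN) ((Z.solvesOn hjN).const_mul B))
  limL j hj1 hjN :=
    ⟨((Y.limL j hj1 hjN).1.const_mul A).add ((Z.limL j hj1 hjN).1.const_mul B),
      ((Y.limL j hj1 hjN).2.const_mul A).add ((Z.limL j hj1 hjN).2.const_mul B)⟩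
  limR j hj :=
    ⟨((Y.limR j hj).1.const_mul A).add ((Z.limR j hj).1.const_mul B),
      ((Y.limR j hj).2.const_mul A).add ((Z.limR j hj).2.const_mul B)⟩
  jump j hj1 hjN :=
    ⟨by linear_combination A * (Y.jump j hj1 hjN).1 + B * (Z.jump j hj1 hjN).1,
      by linear_combination A * (Y.jump j hj1 hjN).2 + B * (Z.jump j hj1 hjN).2⟩
  left_end := ⟨by rw [Y.left_end.1, Z.left_end.1], by rw [Y.left_end.2, Z.left_end.2]⟩
  right_end := ⟨by rw [Y.right_end.1, Z.right_end.1], by rw [Y.right_end.2, Z.right_end.2]⟩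

variable (Y Z : JumpSolution N b p q γ η' η ρ)

theorem eqOn_zero_of_yR_eq_zero
    (hr : ∀ j < N, IntegrableOn (pencilCoeff p q ρ) (Icc (b j) (b (j + 1))))
    {j : ℕ} (hj : j < N) (h : Y.yR j = 0) (h' : Y.yR' j = 0) :
    ∀ x ∈ Ioo (b j) (b (j + 1)), Y.y x = 0 ∧ Y.y' x = 0 :=
  (Y.solvesOn hj).eqOn_zero_of_tendsto (hr j hj) (h ▸ (Y.limR j hj).1) (h' ▸ (Y.limR j hj).2)

theorem yL_succ_eq_zero
    (hr : ∀ j < N, IntegrableOn (pencilCoeff p q ρ) (Icc (b j) (b (j + 1))))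
    (hb : ∀ j < N, b j < b (j + 1)) {j : ℕ} (hj : j < N) (h : Y.yR j = 0) (h' : Y.yR' j = 0) :
    Y.yL (j + 1) = 0 ∧ Y.yL' (j + 1) = 0 := by
  have hY := Y.eqOn_zero_of_yR_eq_zero hr hj h h'
  exact ⟨eq_of_tendsto_nhdsLT_of_eqOn_Ioo (hb j hj) (fun x hx => (hY x hx).1)
      (Y.limL (j + 1) (by omega) hj).1,
    eq_of_tendsto_nhdsLT_of_eqOn_Ioo (hb j hj) (fun x hx => (hY x hx).2)
      (Y.limL (j + 1) (by omega) hj).2⟩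

theorem yR_eq_zero_of_yR_zero_eq_zero
    (hr : ∀ j < N, IntegrableOn (pencilCoeff p q ρ) (Icc (b j) (b (j + 1))))
    (hb : ∀ j < N, b j < b (j + 1)) (h0 : Y.yR 0 = 0) (h0' : Y.yR' 0 = 0) :
    ∀ j < N, Y.yR j = 0 ∧ Y.yR' j = 0 := by
  intro j hj
  induction j with
  | zero => exact ⟨h0, h0'⟩
  | succ j ih =>
    obtain ⟨hR, hR'⟩ := ih (by omega)
    obtain ⟨hL, hL'⟩ := Y.yL_succ_eq_zero hr hb (by omega) hR hR'
    obtain ⟨hJ, hJ'⟩ := Y.jump (j + 1) (by omega) hj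
    exact ⟨by rw [hJ, hL, mul_zero], by rw [hJ', hL, hL']; ring⟩

theorem yL_eq_zero_of_yR_zero_eq_zero
    (hr : ∀ j < N, IntegrableOn (pencilCoeff p q ρ) (Icc (b j) (b (j + 1))))
    (hb : ∀ j < N, b j < b (j + 1)) (hN : 1 ≤ N) (h0 : Y.yR 0 = 0) (h0' : Y.yR' 0 = 0) :
    Y.yL N = 0 ∧ Y.yL' N = 0 := by
  obtain ⟨n, rfl⟩ : ∃ n, N = n + 1 := ⟨N - 1, by omega⟩
  obtain ⟨h, h'⟩ := Y.yR_eq_zero_of_yR_zero_eq_zero hr hb h0 h0' n (by omega)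
  exact Y.yL_succ_eq_zero hr hb (by omega) h h'

theorem y_eq_zero_of_yR_zero_eq_zero
    (hr : ∀ j < N, IntegrableOn (pencilCoeff p q ρ) (Icc (b j) (b (j + 1))))
    (hb : ∀ j < N, b j < b (j + 1)) (hN : 1 ≤ N) (h0 : Y.yR 0 = 0) (h0' : Y.yR' 0 = 0) :
    ∀ x ∈ Icc (b 0) (b N), (∀ j, 1 ≤ j → j + 1 ≤ N → x ≠ b j) → Y.y x = 0 := by
  intro x hx hne
  by_cases hx0 : x = b 0
  · rw [hx0, Y.left_end.1, h0]
  by_cases hxN : x = b N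
  · rw [hxN, Y.right_end.1, (Y.yL_eq_zero_of_yR_zero_eq_zero hr hb hN h0 h0').1]
  obtain ⟨j, hj, hjx⟩ := exists_mem_Ioo_of_mem_Icc_of_ne hx fun j hj => by
    rcases Nat.eq_zero_or_pos j with rfl | hj1
    · exact hx0
    rcases hj.eq_or_lt with rfl | hjN
    · exact hxN
    exact hne j hj1 hjN
  obtain ⟨h, h'⟩ := Y.yR_eq_zero_of_yR_zero_eq_zero hr hb h0 h0' j hj
  exact (Y.eqOn_zero_of_yR_eq_zero hr hj h h' x hjx).1

theorem yR_zero_eq_zero_of_eqOn_zero (hb : ∀ j < N, b j < b (j + 1))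
    (hN : 1 ≤ N) (hY : ∀ x ∈ Ioo (b 0) (b 1), Y.y x = 0) :
    Y.yR 0 = 0 ∧ Y.yR' 0 = 0 := by
  have hY' : ∀ x ∈ Ioo (b 0) (b 1), Y.y' x = 0 := fun x hx =>
    ((Y.solvesOn hN).1 x hx).unique ((hasDerivAt_const x (0 : ℂ)).congr_of_eventuallyEq
      (eventually_of_mem (Ioo_mem_nhds hx.1 hx.2) hY))
  exact ⟨eq_of_tendsto_nhdsGT_of_eqOn_Ioo (hb 0 hN) hY (Y.limR 0 hN).1,
    eq_of_tendsto_nhdsGT_of_eqOn_Ioo (hb 0 hN) hY' (Y.limR 0 hN).2⟩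

theorem exists_y_ne_zero_iff
    (hr : ∀ j < N, IntegrableOn (pencilCoeff p q ρ) (Icc (b j) (b (j + 1))))
    (hb : ∀ j < N, b j < b (j + 1)) (hN : 1 ≤ N) :
    (∃ x ∈ Icc (b 0) (b N), (∀ j, 1 ≤ j → j + 1 ≤ N → x ≠ b j) ∧ Y.y x ≠ 0) ↔
      ![Y.yR 0, Y.yR' 0] ≠ 0 := by
  have hmono : MonotoneOn b (Iic N) := (strictMonoOn_Iic_of_lt_succ hb).monotoneOn
  constructor
  · rintro ⟨x, hx, hne, hYx⟩ h0
    simp only [Matrix.cons_eq_zero_iff, Matrix.zero_empty, and_true] at h0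
    exact hYx (Y.y_eq_zero_of_yR_zero_eq_zero hr hb hN h0.1 h0.2 x hx hne)
  · intro h0
    contrapose! h0
    obtain ⟨h, h'⟩ := Y.yR_zero_eq_zero_of_eqOn_zero hb hN fun x hx => h0 x
      ⟨hx.1.le, hx.2.le.trans (hmono (by simp; omega) (by simp) hN)⟩
      fun j hj hjN => (hx.2.trans_le (hmono (by simp; omega) (by simp; omega) hj)).ne
    simp [h, h']

theorem yL_eq_comb_of_fundamental
    (hr : ∀ j < N, IntegrableOn (pencilCoeff p q ρ) (Icc (b j) (b (j + 1))))
    (hb : ∀ j < N, b j < b (j + 1)) (hN : 1 ≤ N) (SS CC : JumpSolution N b p q γ η' η ρ)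
    (hS : SS.yR 0 = 0 ∧ SS.yR' 0 = 1) (hC : CC.yR 0 = 1 ∧ CC.yR' 0 = 0) :
    Y.yL N = Y.yR 0 * CC.yL N + Y.yR' 0 * SS.yL N ∧
      Y.yL' N = Y.yR 0 * CC.yL' N + Y.yR' 0 * SS.yL' N := by
  set W := linComb hr 1 Y (-1) (linComb hr (Y.yR 0) CC (Y.yR' 0) SS)
  obtain ⟨h, h'⟩ := W.yL_eq_zero_of_yR_zero_eq_zero hr hb hN (by simp [W, linComb, hS, hC])
    (by simp [W, linComb, hS, hC])
  simp only [W, linComb] at h h'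
  exact ⟨by linear_combination h, by linear_combination h'⟩

theorem wronskian_yL_succ
    (hr : ∀ j < N, IntegrableOn (pencilCoeff p q ρ) (Icc (b j) (b (j + 1))))
    (hb : ∀ j < N, b j < b (j + 1)) {j : ℕ} (hj : j < N) :
    Y.yL (j + 1) * Z.yL' (j + 1) - Z.yL (j + 1) * Y.yL' (j + 1) =
      Y.yR j * Z.yR' j - Z.yR j * Y.yR' j := by
  set m := (b j + b (j + 1)) / 2
  have hm : m ∈ Ioo (b j) (b (j + 1)) :=
    ⟨left_lt_add_div_two.2 (hb j hj), add_div_two_lt_right.2 (hb j hj)⟩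
  have hW : ∀ x ∈ Ioo (b j) (b (j + 1)),
      Y.y x * Z.y' x - Z.y x * Y.y' x = Y.y m * Z.y' m - Z.y m * Y.y' m := fun x hx =>
    (Y.solvesOn hj).wronskian_eq (hr j hj) (Z.solvesOn hj) hm hx
  obtain ⟨hYL, hYL'⟩ := Y.limL (j + 1) (by omega) hj
  obtain ⟨hZL, hZL'⟩ := Z.limL (j + 1) (by omega) hj
  obtain ⟨hYR, hYR'⟩ := Y.limR j hj
  obtain ⟨hZR, hZR'⟩ := Z.limR j hj
  rw [eq_of_tendsto_nhdsLT_of_eqOn_Ioo (hb j hj) hW ((hYL.mul hZL').sub (hZL.mul hYL')),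
    eq_of_tendsto_nhdsGT_of_eqOn_Ioo (hb j hj) hW ((hYR.mul hZR').sub (hZR.mul hYR'))]

theorem wronskian_yR_eq_wronskian_yL {j : ℕ} (hγ : γ j ≠ 0) (hj1 : 1 ≤ j) (hjN : j + 1 ≤ N) :
    Y.yR j * Z.yR' j - Z.yR j * Y.yR' j = Y.yL j * Z.yL' j - Z.yL j * Y.yL' j := by
  obtain ⟨hY, hY'⟩ := Y.jump j hj1 hjN
  obtain ⟨hZ, hZ'⟩ := Z.jump j hj1 hjN
  rw [hY, hY', hZ, hZ']
  linear_combination (Y.yL j * Z.yL' j - Z.yL j * Y.yL' j) * mul_inv_cancel₀ hγ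

theorem wronskian_yL_eq
    (hr : ∀ j < N, IntegrableOn (pencilCoeff p q ρ) (Icc (b j) (b (j + 1))))
    (hb : ∀ j < N, b j < b (j + 1)) (hγ : ∀ j, 1 ≤ j → j + 1 ≤ N → γ j ≠ 0) (hN : 1 ≤ N) :
    Y.yL N * Z.yL' N - Z.yL N * Y.yL' N = Y.yR 0 * Z.yR' 0 - Z.yR 0 * Y.yR' 0 := by
  have hR : ∀ j < N, Y.yR j * Z.yR' j - Z.yR j * Y.yR' j =
      Y.yR 0 * Z.yR' 0 - Z.yR 0 * Y.yR' 0 := by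
    intro j hj
    induction j with
    | zero => rfl
    | succ j ih =>
      rw [Y.wronskian_yR_eq_wronskian_yL Z (hγ (j + 1) (by omega) hj) (by omega) hj,
        Y.wronskian_yL_succ Z hr hb (by omega), ih (by omega)]
  obtain ⟨n, rfl⟩ : ∃ n, N = n + 1 := ⟨N - 1, by omega⟩
  rw [Y.wronskian_yL_succ Z hr hb (by omega), hR n (by omega)]

theorem exists_initial_data_eq
    (hr : ∀ j < N, IntegrableOn (pencilCoeff p q ρ) (Icc (b j) (b (j + 1))))
    (SS CC : JumpSolution N b p q γ η' η ρ) (hS : SS.yR 0 = 0 ∧ SS.yR' 0 = 1)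
    (hC : CC.yR 0 = 1 ∧ CC.yR' 0 = 0) (v : Fin 2 → ℂ) :
    ∃ Y : JumpSolution N b p q γ η' η ρ, ![Y.yR 0, Y.yR' 0] = v :=
  ⟨linComb hr (v 0) CC (v 1) SS, by ext i; fin_cases i <;> simp [linComb, hS, hC]⟩

/-- The boundary conditions of `B` as a linear system in `(y(0), y'(0))`, once
`y(T) = y(0) C(T) + y'(0) S(T)` is substituted; `k` stands for `iρh' + h`. -/
def boundaryMatrix (α β k : ℂ) (SS CC : JumpSolution N b p q γ η' η ρ) :
    Matrix (Fin 2) (Fin 2) ℂ :=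
  !![1 - α * CC.yL N, -(α * SS.yL N); -(k + β * CC.yL' N), 1 - β * SS.yL' N]

theorem boundary_conditions_iff_mulVec_eq_zero
    (hr : ∀ j < N, IntegrableOn (pencilCoeff p q ρ) (Icc (b j) (b (j + 1))))
    (hb : ∀ j < N, b j < b (j + 1)) (hN : 1 ≤ N) (SS CC : JumpSolution N b p q γ η' η ρ)
    (hS : SS.yR 0 = 0 ∧ SS.yR' 0 = 1) (hC : CC.yR 0 = 1 ∧ CC.yR' 0 = 0) (α β k : ℂ) :
    (Y.yR 0 = α * Y.yL N ∧ Y.yR' 0 - k * Y.yR 0 = β * Y.yL' N) ↔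
      boundaryMatrix α β k SS CC *ᵥ ![Y.yR 0, Y.yR' 0] = 0 := by
  obtain ⟨hL, hL'⟩ := Y.yL_eq_comb_of_fundamental hr hb hN SS CC hS hC
  simp only [boundaryMatrix, hL, hL', Matrix.cons_mulVec, Matrix.cons_dotProduct_cons,
    Matrix.dotProduct_of_isEmpty, Matrix.empty_mulVec, Matrix.cons_eq_zero_iff,
    Matrix.zero_empty, and_true]
  constructor <;> rintro ⟨h1, h2⟩ <;> exact ⟨by linear_combination h1, by linear_combination h2⟩

theorem det_boundaryMatrix (α β k : ℂ) (SS CC : JumpSolution N b p q γ η' η ρ)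
    (hW : CC.yL N * SS.yL' N - SS.yL N * CC.yL' N = 1) :
    (boundaryMatrix α β k SS CC).det =
      -(α * (CC.yL N + k * SS.yL N) + β * SS.yL' N - (1 + α * β)) := by
  rw [boundaryMatrix, Matrix.det_fin_two_of]
  linear_combination α * β * hW

end JumpSolution

theorem eigenvalue_iff_characteristic_function_vanishes_general
    (T : ℝ) (N : ℕ) (b : ℕ → ℝ) (p q : ℝ → ℂ) (γ η' η : ℕ → ℂ)
    (hN : 1 ≤ N) (hb0 : b 0 = 0) (hbN : b N = T)
    (hb : ∀ j, j < N → b j < b (j + 1))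
    (hγ : ∀ j, 1 ≤ j → j + 1 ≤ N → γ j ≠ 0)
    (hp : AbsCont p 0 T) (hq : MeasureTheory.IntegrableOn q (Set.Icc 0 T))
    (α β h' h : ℂ)
    (ρ₀ : ℂ)
    (SS CC : JumpSolution N b p q γ η' η ρ₀)
    (hS : SS.yR 0 = 0 ∧ SS.yR' 0 = 1)
    (hC : CC.yR 0 = 1 ∧ CC.yR' 0 = 0) :
    (∃ Y : JumpSolution N b p q γ η' η ρ₀,
      (∃ x ∈ Set.Icc (0 : ℝ) T, (∀ j, 1 ≤ j → j + 1 ≤ N → x ≠ b j) ∧ Y.y x ≠ 0) ∧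
      Y.yR 0 = α * Y.yL N ∧
      Y.yR' 0 - (Complex.I * ρ₀ * h' + h) * Y.yR 0 = β * Y.yL' N) ↔
    α * (CC.yL N + (Complex.I * ρ₀ * h' + h) * SS.yL N) + β * SS.yL' N
      - (1 + α * β) = 0 := by
  have hmono : MonotoneOn b (Iic N) := (strictMonoOn_Iic_of_lt_succ hb).monotoneOn
  have hr : ∀ j < N, IntegrableOn (pencilCoeff p q ρ₀) (Icc (b j) (b (j + 1))) := fun j hj =>
    (integrableOn_pencilCoeff hp hq ρ₀).mono_set <| by
      rw [← hb0, ← hbN]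
      exact Icc_subset_Icc (hmono (by simp) (by simp; omega) (by omega))
        (hmono (by simp; omega) (by simp) hj)
  have hW : CC.yL N * SS.yL' N - SS.yL N * CC.yL' N = 1 := by
    rw [CC.wronskian_yL_eq SS hr hb hγ hN, hS.1, hS.2, hC.1, hC.2]; ring
  rw [show Icc (0 : ℝ) T = Icc (b 0) (b N) by rw [hb0, hbN], ← neg_eq_zero,
    ← JumpSolution.det_boundaryMatrix α β _ SS CC hW, ← Matrix.exists_mulVec_eq_zero_iff]
  constructor
  · rintro ⟨Y, hY, hbc⟩
    exact ⟨_, (Y.exists_y_ne_zero_iff hr hb hN).1 hY,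
      (Y.boundary_conditions_iff_mulVec_eq_zero hr hb hN SS CC hS hC α β _).1 hbc⟩
  · rintro ⟨v, hv, hMv⟩
    obtain ⟨Y, rfl⟩ := JumpSolution.exists_initial_data_eq hr SS CC hS hC v
    exact ⟨Y, (Y.exists_y_ne_zero_iff hr hb hN).2 hv,
      (Y.boundary_conditions_iff_mulVec_eq_zero hr hb hN SS CC hS hC α β _).2 hMv⟩

/-- `ρ₀ ∈ ℂ` is an eigenvalue of the boundary value problem `B`
(there is a nontrivial solution with jumps at `ρ₀` satisfying the quasi-periodic
boundary conditions `y(0) = α y(T)` and `y'(0) - (iρ₀h' + h) y(0) = β y'(T)`,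
values at `0` and `T` being the one-sided limits) if and only if `a(ρ₀) = 0`, where
`a(ρ) = α φ(T,ρ) + β S'(T,ρ) - (1 + αβ)` and `φ = C + (iρh' + h) S`. -/
theorem eigenvalue_iff_characteristic_function_vanishes
    (T : ℝ) (N : ℕ) (b : ℕ → ℝ) (p q : ℝ → ℂ) (γ η' η : ℕ → ℂ)
    (hT : 0 < T) (hN : 1 ≤ N) (hb0 : b 0 = 0) (hbN : b N = T)
    (hb : ∀ j, j < N → b j < b (j + 1))
    (hγ : ∀ j, 1 ≤ j → j + 1 ≤ N → γ j ≠ 0)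
    (hp : AbsCont p 0 T) (hq : MeasureTheory.IntegrableOn q (Set.Icc 0 T))
    (α β h' h : ℂ) (hαβ : α * β ≠ 0)
    (ρ₀ : ℂ)
    (SS CC : JumpSolution N b p q γ η' η ρ₀)
    (hS : SS.yR 0 = 0 ∧ SS.yR' 0 = 1)
    (hC : CC.yR 0 = 1 ∧ CC.yR' 0 = 0) :
    (∃ Y : JumpSolution N b p q γ η' η ρ₀,
      (∃ x ∈ Set.Icc (0 : ℝ) T, (∀ j, 1 ≤ j → j + 1 ≤ N → x ≠ b j) ∧ Y.y x ≠ 0) ∧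
      Y.yR 0 = α * Y.yL N ∧
      Y.yR' 0 - (Complex.I * ρ₀ * h' + h) * Y.yR 0 = β * Y.yL' N) ↔
    α * (CC.yL N + (Complex.I * ρ₀ * h' + h) * SS.yL N) + β * SS.yL' N
      - (1 + α * β) = 0 :=
  eigenvalue_iff_characteristic_function_vanishes_general T N b p q γ η' η hN hb0 hbN hb hγ hp hq α
    β h' h ρ₀ SS CC hS hC
end
end

section
/- Let f be an entire function on ℂ, let E ⊂ ℂ be a set of points whose pairwise distances all exceed 2δ for some δ > 0, and let C > 0 be such that |f(z)| ≤ C/|z| for every z ∈ ℂ with dist(z, E) ≥ δ (and z ≠ 0). Then f is identically zero. -/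
/-!
Put `g z = z * f z`; it is entire and `‖g‖ ≤ C` off the `δ`-neighbourhood of `E`. Since the points
of `E` are `2δ`-separated, the sphere of radius `δ` about any `e ∈ E` stays at distance `≥ δ` from
all of `E`, so the maximum modulus principle on the ball `B(e, δ)` extends the bound `‖g‖ ≤ C` to
all of `ℂ`. By Liouville `g` is constant, equal to `g 0 = 0`, hence `f` vanishes off `0` and, by
continuity, everywhere.
-/

open Metric Set

theorem le_dist_of_mem_sphere_of_pairwise_lt_dist {X : Type*} [PseudoMetricSpace X] {S : Set X}
    {δ : ℝ} (hS : S.Pairwise fun a b => 2 * δ < dist a b) {e w : X} (he : e ∈ S)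
    (hw : w ∈ sphere e δ) : ∀ e' ∈ S, δ ≤ dist w e' := by
  intro e' he'
  rw [mem_sphere] at hw
  rcases eq_or_ne e' e with rfl | hne
  · exact hw.ge
  · have hsep := hS he' he hne
    have htri := dist_triangle e' w e
    rw [dist_comm e' w] at htri
    linarith

theorem norm_le_of_norm_le_off_separated_balls {E F : Type*} [NormedAddCommGroup E]
    [NormedSpace ℂ E] [Nontrivial E] [NormedAddCommGroup F] [NormedSpace ℂ F] {g : E → F}
    (hg : Differentiable ℂ g) {S : Set E} {δ M : ℝ} (hδ : 0 < δ)
    (hS : S.Pairwise fun a b => 2 * δ < dist a b)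
    (hM : ∀ z, (∀ e ∈ S, δ ≤ dist z e) → ‖g z‖ ≤ M) (z : E) : ‖g z‖ ≤ M := by
  by_cases hz : ∀ e ∈ S, δ ≤ dist z e
  · exact hM z hz
  push Not at hz
  obtain ⟨e, he, hze⟩ := hz
  refine Complex.norm_le_of_forall_mem_frontier_norm_le isBounded_ball hg.diffContOnCl
    (fun w hw => hM w ?_) (subset_closure (mem_ball.2 hze))
  rw [frontier_ball e hδ.ne'] at hw
  exact le_dist_of_mem_sphere_of_pairwise_lt_dist hS he hw

theorem eq_zero_of_differentiable_of_norm_mul_le {f : ℂ → ℂ} (hf : Differentiable ℂ f) {M : ℝ}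
    (hM : ∀ z, ‖z * f z‖ ≤ M) : f = 0 := by
  have hg : Differentiable ℂ fun z => z * f z := differentiable_id.mul hf
  have hg_bdd : Bornology.IsBounded (range fun z => z * f z) :=
    isBounded_iff_forall_norm_le.2 ⟨M, forall_mem_range.2 hM⟩
  refine Continuous.ext_on (dense_compl_singleton 0) hf.continuous continuous_const
    fun z (hz : z ≠ 0) => ?_
  have hg_zero : z * f z = 0 * f 0 := hg.apply_eq_apply_of_bounded hg_bdd z 0
  simpa [hz] using hg_zero

/-- Let `f` be entire, `E ⊆ ℂ` a set whose points have pairwise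
distances exceeding `2δ` for some `δ > 0`, and suppose `|f z| ≤ C / |z|` for every
`z ≠ 0` at distance at least `δ` from `E`.  Then `f ≡ 0`. -/
theorem entire_decaying_off_separated_set_eq_zero
    (f : ℂ → ℂ) (hf : Differentiable ℂ f)
    (E : Set ℂ) (δ : ℝ) (hδ : 0 < δ)
    (hsep : ∀ e₁ ∈ E, ∀ e₂ ∈ E, e₁ ≠ e₂ → 2 * δ < dist e₁ e₂)
    (C : ℝ) (hC : 0 < C)
    (hbound : ∀ z : ℂ, z ≠ 0 → (∀ e ∈ E, δ ≤ dist z e) →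
      ‖f z‖ ≤ C / ‖z‖) :
    ∀ z : ℂ, f z = 0 := by
  have hgood : ∀ z : ℂ, (∀ e ∈ E, δ ≤ dist z e) → ‖z * f z‖ ≤ C := by
    intro z hz
    rcases eq_or_ne z 0 with rfl | h0
    · simpa using hC.le
    · rw [norm_mul]
      exact (le_div_iff₀' (norm_pos_iff.2 h0)).1 (hbound z h0 hz)
  have hf_zero : f = 0 := eq_zero_of_differentiable_of_norm_mul_le hf
    (norm_le_of_norm_le_off_separated_balls (differentiable_id.mul hf) hδ hsep hgood)
  exact fun z => congrFun hf_zero z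
end

section
/- Let f be an entire function on ℂ, let E ⊂ ℂ be a set of points whose pairwise distances all exceed 2δ for some δ > 0, and let C > 0 be such that |f(z)| ≤ C for every z ∈ ℂ with dist(z, E) ≥ δ. Then f is constant. -/
/-! Every point within `δ` of some `e ∈ E` lies in the ball `B(e, δ)`, whose boundary sphere
stays at distance `≥ δ` from all of `E` by the `2δ`-separation. The maximum modulus principle on
that ball therefore extends the bound `C` to the whole plane, and Liouville's theorem finishes. -/

open Metric

lemma le_dist_of_dist_eq_of_separated {X : Type*} [PseudoMetricSpace X] {E : Set X} {δ : ℝ}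
    (hsep : ∀ e₁ ∈ E, ∀ e₂ ∈ E, e₁ ≠ e₂ → 2 * δ < dist e₁ e₂)
    {e w : X} (he : e ∈ E) (hw : dist w e = δ) : ∀ e' ∈ E, δ ≤ dist w e' := by
  intro e' he'
  rcases eq_or_ne e' e with rfl | hne
  · exact hw.ge
  · have hfar := hsep e he e' he' hne.symm
    have htri := dist_triangle_left e e' w
    linarith

section

variable {V F : Type*} [NormedAddCommGroup V] [NormedSpace ℂ V]
  [NormedAddCommGroup F] [NormedSpace ℂ F]

lemma norm_le_of_norm_le_off_thickening_of_separated [Nontrivial V] {f : V → F}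
    (hf : Differentiable ℂ f) {E : Set V} {δ : ℝ} (hδ : 0 < δ)
    (hsep : ∀ e₁ ∈ E, ∀ e₂ ∈ E, e₁ ≠ e₂ → 2 * δ < dist e₁ e₂) {C : ℝ}
    (hbound : ∀ z, (∀ e ∈ E, δ ≤ dist z e) → ‖f z‖ ≤ C) (z : V) : ‖f z‖ ≤ C := by
  by_cases hfar : ∀ e ∈ E, δ ≤ dist z e
  · exact hbound z hfar
  push Not at hfar
  obtain ⟨e, he, hze⟩ := hfar
  refine Complex.norm_le_of_forall_mem_frontier_norm_le isBounded_ball hf.diffContOnCl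
    (fun w hw => hbound w (le_dist_of_dist_eq_of_separated hsep he ?_))
    (subset_closure (mem_ball.mpr hze))
  rwa [frontier_ball e hδ.ne'] at hw

lemma Differentiable.exists_const_of_norm_le {f : V → F} (hf : Differentiable ℂ f) {C : ℝ}
    (hC : ∀ z, ‖f z‖ ≤ C) : ∃ c, ∀ z, f z = c :=
  have hbdd : Bornology.IsBounded (Set.range f) :=
    isBounded_iff_forall_norm_le.mpr ⟨C, Set.forall_mem_range.mpr hC⟩
  ⟨f 0, fun z => hf.apply_eq_apply_of_bounded hbdd z 0⟩

end

theorem entire_bounded_off_separated_set_constant_general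
    (f : ℂ → ℂ) (hf : Differentiable ℂ f)
    (E : Set ℂ) (δ : ℝ) (hδ : 0 < δ)
    (hsep : ∀ e₁ ∈ E, ∀ e₂ ∈ E, e₁ ≠ e₂ → 2 * δ < dist e₁ e₂)
    (C : ℝ)
    (hbound : ∀ z : ℂ, (∀ e ∈ E, δ ≤ dist z e) → ‖f z‖ ≤ C) :
    ∃ c : ℂ, ∀ z : ℂ, f z = c :=
  hf.exists_const_of_norm_le (norm_le_of_norm_le_off_thickening_of_separated hf hδ hsep hbound)

/-- Let `f` be entire, `E ⊆ ℂ` a set whose points have pairwise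
distances exceeding `2δ` for some `δ > 0`, and suppose `|f z| ≤ C` for every `z` at
distance at least `δ` from `E`.  Then `f` is constant. -/
theorem entire_bounded_off_separated_set_constant
    (f : ℂ → ℂ) (hf : Differentiable ℂ f)
    (E : Set ℂ) (δ : ℝ) (hδ : 0 < δ)
    (hsep : ∀ e₁ ∈ E, ∀ e₂ ∈ E, e₁ ≠ e₂ → 2 * δ < dist e₁ e₂)
    (C : ℝ) (hC : 0 < C)
    (hbound : ∀ z : ℂ, (∀ e ∈ E, δ ≤ dist z e) → ‖f z‖ ≤ C) :
    ∃ c : ℂ, ∀ z : ℂ, f z = c :=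
  entire_bounded_off_separated_set_constant_general f hf E δ hδ hsep C hbound
end

section
/- Suppose that for each k = 1,…,N there is a constant C_k > 0 such that for all x_k ∈ [0,T_k], all ρ ∈ ℂ with |ρ| ≥ 1, and ν = 0,1: |S_k^{(ν)}(x_k,ρ)| ≤ C_k |ρ|^{ν−1} e^{|Im ρ| x_k} and |C_k^{(ν)}(x_k,ρ)| ≤ C_k |ρ|^{ν} e^{|Im ρ| x_k}. Then there is a constant C > 0 such that for all x ∈ [0,T] ∖ {b_1,…,b_{N−1}}, all ρ ∈ ℂ with |ρ| ≥ 1, and ν = 0,1: |S^{(ν)}(x,ρ)| ≤ C |ρ|^{ν−1} e^{|Im ρ| x} and |C^{(ν)}(x,ρ)| ≤ C |ρ|^{ν} e^{|Im ρ| x}. -/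
open MeasureTheory Set Filter Complex intervalIntegral
open scoped Topology

noncomputable section

/-- `y` (with derivative `y'`) solves the pencil equation on the closed interval
`[c, d]`, with `y, y'` absolutely continuous there. -/
def PencilSolOnIcc (p q : ℝ → ℂ) (ρ : ℂ) (y y' : ℝ → ℂ) (c d : ℝ) : Prop :=
  (∀ x ∈ Set.Icc c d, HasDerivWithinAt y (y' x) (Set.Icc c d) x) ∧
  (∀ u ∈ Set.Icc c d, ∀ v ∈ Set.Icc c d,
    y' v - y' u = ∫ t in u..v, -((ρ ^ 2 + ρ * p t + q t) * y t))


set_option maxHeartbeats 1600000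

lemma my_doubling (s t : ℝ) (hst : s ≤ t) (φ g : ℝ → ℝ)
    (hφ_int : IntegrableOn φ (Icc s t)) (hφ0 : ∀ x, 0 ≤ φ x)
    (hg_cont : ContinuousOn g (Icc s t)) (hg0 : ∀ x, 0 ≤ g x)
    (hsmall : (∫ x in s..t, φ x) ≤ 1/2)
    (hgint : ∀ a ∈ Icc s t, ∀ b ∈ Icc s t, a ≤ b → IntegrableOn (fun x => φ x * g x) (Icc a b))
    (hineq : ∀ a ∈ Icc s t, ∀ b ∈ Icc s t, a ≤ b → g b ≤ g a + ∫ x in a..b, φ x * g x) :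
    ∀ x ∈ Icc s t, g x ≤ 2 * g s := by
  obtain ⟨x₀, hx₀, hmax⟩ := isCompact_Icc.exists_isMaxOn (nonempty_Icc.2 hst) hg_cont
  set M := g x₀ with hM
  have hM0 : 0 ≤ M := hg0 _
  have key : M ≤ g s + M / 2 := by
    have h1 : g x₀ ≤ g s + ∫ x in s..x₀, φ x * g x :=
      hineq s ⟨le_rfl, hst⟩ x₀ hx₀ hx₀.1
    have h2 : (∫ x in s..x₀, φ x * g x) ≤ ∫ x in s..x₀, φ x * M := by
      apply intervalIntegral.integral_mono_on hx₀.1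
      · exact (intervalIntegrable_iff_integrableOn_Icc_of_le hx₀.1).2 (hgint s ⟨le_rfl, hst⟩ x₀ hx₀ hx₀.1)
      · have h5 : IntegrableOn (fun x => φ x * M) (Icc s x₀) :=
          (hφ_int.mono_set (Icc_subset_Icc le_rfl hx₀.2)).mul_const M
        exact (intervalIntegrable_iff_integrableOn_Icc_of_le hx₀.1).2 h5
      · intro x hx
        exact mul_le_mul_of_nonneg_left (hmax ⟨hx.1, hx.2.trans hx₀.2⟩) (hφ0 x)
    have h3 : (∫ x in s..x₀, φ x * M) = (∫ x in s..x₀, φ x) * M := by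
      rw [← intervalIntegral.integral_mul_const]
    have h4 : (∫ x in s..x₀, φ x) ≤ ∫ x in s..t, φ x := by
      apply intervalIntegral.integral_mono_interval le_rfl hx₀.1 hx₀.2
      · filter_upwards with x using hφ0 x
      · exact (intervalIntegrable_iff_integrableOn_Icc_of_le hst).2 hφ_int
    calc M ≤ g s + ∫ x in s..x₀, φ x * g x := h1
      _ ≤ g s + (∫ x in s..x₀, φ x) * M := by rw [← h3]; linarith
      _ ≤ g s + (1/2) * M := by
          have := mul_le_mul_of_nonneg_right (h4.trans hsmall) hM0
          linarith
      _ = g s + M / 2 := by ring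
  intro x hx
  have := hmax hx
  simp only [IsMaxOn, IsMaxFilter] at this
  have hgx : g x ≤ M := hmax hx
  linarith

lemma my_gronwall_zero (c v : ℝ) (hcv : c < v) (φ g : ℝ → ℝ)
    (hφ_int : IntegrableOn φ (Icc c v)) (hφ0 : ∀ x, 0 ≤ φ x)
    (hg_cont : ContinuousOn g (Ioc c v)) (hg0 : ∀ x, 0 ≤ g x)
    (hgint : ∀ a ∈ Ioc c v, ∀ b ∈ Ioc c v, a ≤ b → IntegrableOn (fun x => φ x * g x) (Icc a b))
    (hineq : ∀ a ∈ Ioc c v, ∀ b ∈ Ioc c v, a ≤ b → g b ≤ g a + ∫ x in a..b, φ x * g x)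
    (hlim : Tendsto g (𝓝[>] c) (𝓝 0)) :
    ∀ t ∈ Ioc c v, g t = 0 := by
  set E : Set ℝ := {t | t ∈ Icc c v ∧ ∀ x ∈ Ioc c t, g x = 0} with hE
  have hcE : c ∈ E := ⟨⟨le_rfl, hcv.le⟩, fun x hx => absurd hx.2 (not_le.2 hx.1)⟩
  have hEne : E.Nonempty := ⟨c, hcE⟩
  have hEbdd : BddAbove E := ⟨v, fun t ht => ht.1.2⟩
  set m := sSup E with hm
  have hcm : c ≤ m := le_csSup hEbdd hcE
  have hmv : m ≤ v := csSup_le hEne (fun t ht => ht.1.2)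
  have hmE0 : ∀ x, c < x → x < m → g x = 0 := by
    intro x hx1 hx2
    obtain ⟨t, htE, hxt⟩ := exists_lt_of_lt_csSup hEne hx2
    exact htE.2 x ⟨hx1, hxt.le⟩
  have hgm : c < m → g m = 0 := by
    intro hcx
    have h1 : Tendsto g (𝓝[Ioo c m] m) (𝓝 (g m)) := by
      have := (hg_cont m ⟨hcx, hmv⟩).mono (Ioo_subset_Ioc_self.trans
        (Ioc_subset_Ioc le_rfl hmv))
      exact this
    have h2 : Tendsto g (𝓝[Ioo c m] m) (𝓝 0) := by
      have h0 : ∀ y ∈ Ioo c m, g y = 0 := fun y hy => hmE0 y hy.1 hy.2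
      refine Tendsto.congr' ?_ tendsto_const_nhds
      filter_upwards [self_mem_nhdsWithin] with y hy using (h0 y hy).symm
    have : NeBot (𝓝[Ioo c m] m) := by
      rw [nhdsWithin_Ioo_eq_nhdsLT hcx]; infer_instance
    exact tendsto_nhds_unique h1 h2
  have hmE : m ∈ E := by
    refine ⟨⟨hcm, hmv⟩, fun x hx => ?_⟩
    rcases lt_or_eq_of_le hx.2 with h | h
    · exact hmE0 x hx.1 h
    · rw [h]; exact hgm (h ▸ hx.1)
  -- now show m = v
  by_cases hme : m = v
  · intro t ht
    exact hmE.2 t (hme ▸ ht)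
  have hmv' : m < v := lt_of_le_of_ne hmv hme
  exfalso
  -- find t' ∈ (m, v] with ∫ m..t' φ < 1/2
  have hFcont : Tendsto (fun t => ∫ x in m..t, φ x) (𝓝[>] m) (𝓝 0) := by
    have hint : IntegrableOn φ (uIcc m v) := by
      rw [uIcc_of_le hmv]; exact hφ_int.mono_set (Icc_subset_Icc hcm le_rfl)
    have hc := (continuousOn_primitive_interval hint) m (by
      rw [uIcc_of_le hmv]; exact ⟨le_rfl, hmv⟩)
    have : (∫ x in m..m, φ x) = 0 := intervalIntegral.integral_same
    rw [ContinuousWithinAt, this] at hc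
    have h1 : Tendsto (fun t => ∫ x in m..t, φ x) (𝓝[Ioc m v] m) (𝓝 0) :=
      hc.mono_left (nhdsWithin_mono _ (fun y hy => by
        rw [uIcc_of_le hmv'.le]; exact ⟨hy.1.le, hy.2⟩))
    rwa [nhdsWithin_Ioc_eq_nhdsGT hmv'] at h1
  have hev : ∀ᶠ t in 𝓝[>] m, (∫ x in m..t, φ x) < 1/2 ∧ t ∈ Ioc m v := by
    filter_upwards [hFcont.eventually (eventually_lt_nhds (by norm_num : (0:ℝ) < 1/2)),
      Ioc_mem_nhdsGT_of_mem ⟨le_rfl, hmv'⟩] with t h1 h2 using ⟨h1, h2⟩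
  obtain ⟨t', hF', hmt'⟩ := hev.exists
  -- doubling on subintervals
  have hdbl : ∀ u ∈ Ioc m t', ∀ x ∈ Icc u t', g x ≤ 2 * g u := by
    intro u hu x hx
    have huv : u ∈ Ioc c v := ⟨hcm.trans_lt hu.1, hu.2.trans hmt'.2⟩
    refine my_doubling u t' hu.2 φ g ?_ hφ0 ?_ hg0 ?_ ?_ ?_ x hx
    · exact hφ_int.mono_set (Icc_subset_Icc huv.1.le (hmt'.2))
    · exact hg_cont.mono (fun y hy => ⟨huv.1.trans_le hy.1, hy.2.trans hmt'.2⟩)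
    · calc (∫ x in u..t', φ x) ≤ ∫ x in m..t', φ x := by
            apply intervalIntegral.integral_mono_interval hu.1.le hu.2 le_rfl
            · filter_upwards with x using hφ0 x
            · exact (intervalIntegrable_iff_integrableOn_Icc_of_le hmt'.1.le).2
                (hφ_int.mono_set (Icc_subset_Icc hcm hmt'.2))
          _ ≤ 1/2 := hF'.le
    · intro a ha b hb hab
      exact hgint a ⟨huv.1.trans_le ha.1, ha.2.trans hmt'.2⟩
        b ⟨huv.1.trans_le hb.1, hb.2.trans hmt'.2⟩ hab
    · intro a ha b hb hab
      exact hineq a ⟨huv.1.trans_le ha.1, ha.2.trans hmt'.2⟩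
        b ⟨huv.1.trans_le hb.1, hb.2.trans hmt'.2⟩ hab
  have ht'E : t' ∈ E := by
    refine ⟨⟨hcm.trans hmt'.1.le, hmt'.2⟩, ?_⟩
    rcases eq_or_lt_of_le hcm with hcm' | hcm'
    · -- m = c : use the limit
      intro x hx
      have hxm : m < x := hcm' ▸ hx.1
      have hkey : ∀ u ∈ Ioc m x, g x ≤ 2 * g u := by
        intro u hu
        exact hdbl u ⟨hu.1, hu.2.trans hx.2⟩ x ⟨hu.2, hx.2⟩
      have hlim' : Tendsto g (𝓝[>] m) (𝓝 0) := hcm' ▸ hlim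
      have h2 : Tendsto (fun u => 2 * g u) (𝓝[>] m) (𝓝 (2 * 0)) := hlim'.const_mul 2
      rw [mul_zero] at h2
      have hev2 : ∀ᶠ u in 𝓝[>] m, g x ≤ 2 * g u := by
        filter_upwards [Ioc_mem_nhdsGT_of_mem ⟨le_rfl, hxm⟩] with u hu using hkey u hu
      have := ge_of_tendsto h2 hev2
      exact le_antisymm this (hg0 x)
    · -- m > c : g m = 0 and double from m
      have hgm : g m = 0 := hmE.2 m ⟨hcm', le_rfl⟩
      intro x hx
      rcases le_or_gt x m with h | h
      · exact hmE.2 x ⟨hx.1, h⟩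
      · -- doubling on [m, t'] directly
        have := my_doubling m t' hmt'.1.le φ g
          (hφ_int.mono_set (Icc_subset_Icc hcm hmt'.2)) hφ0
          (hg_cont.mono (fun y hy => ⟨hcm'.trans_le hy.1, hy.2.trans hmt'.2⟩)) hg0
          hF'.le
          (fun a ha b hb hab => hgint a ⟨hcm'.trans_le ha.1, ha.2.trans hmt'.2⟩
            b ⟨hcm'.trans_le hb.1, hb.2.trans hmt'.2⟩ hab)
          (fun a ha b hb hab => hineq a ⟨hcm'.trans_le ha.1, ha.2.trans hmt'.2⟩
            b ⟨hcm'.trans_le hb.1, hb.2.trans hmt'.2⟩ hab)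
          x ⟨h.le, hx.2⟩
        rw [hgm, mul_zero] at this
        exact le_antisymm this (hg0 x)
  exact absurd (le_csSup hEbdd ht'E) (not_le.2 hmt'.1)

lemma pencil_unique (c d : ℝ) (hcd : c < d) (w : ℝ → ℂ)
    (hw : IntegrableOn w (Icc c d))
    (y y' z z' : ℝ → ℂ)
    (hy : ∀ x ∈ Ioo c d, HasDerivAt y (y' x) x)
    (hy' : ∀ u ∈ Ioo c d, ∀ v ∈ Ioo c d, y' v - y' u = ∫ t in u..v, -(w t * y t))
    (hz : ∀ x ∈ Icc c d, HasDerivWithinAt z (z' x) (Icc c d) x)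
    (hz' : ∀ u ∈ Icc c d, ∀ v ∈ Icc c d, z' v - z' u = ∫ t in u..v, -(w t * z t))
    (hy0 : Tendsto y (𝓝[>] c) (𝓝 (z c)))
    (hy0' : Tendsto y' (𝓝[>] c) (𝓝 (z' c))) :
    ∀ x ∈ Ioo c d, y x = z x ∧ y' x = z' x := by
  have hzc : ContinuousOn z (Icc c d) := fun x hx => (hz x hx).continuousWithinAt
  have hwz_int : IntegrableOn (fun t => w t * z t) (Icc c d) :=
    hw.mul_continuousOn hzc isCompact_Icc
  have hz'c : ContinuousOn z' (Icc c d) := by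
    have hint : IntegrableOn (fun t => -(w t * z t)) (uIcc c d) := by
      rw [uIcc_of_le hcd.le]; exact hwz_int.neg
    have hF : ContinuousOn (fun v => z' c + ∫ t in c..v, -(w t * z t)) (Icc c d) := by
      have := continuousOn_primitive_interval hint
      rw [uIcc_of_le hcd.le] at this
      exact continuousOn_const.add this
    refine hF.congr fun v hv => ?_
    have := hz' c ⟨le_rfl, hcd.le⟩ v hv
    linear_combination this
  have hyc : ContinuousOn y (Ioo c d) := fun x hx =>
    ((hy x hx).continuousAt).continuousWithinAt
  have hy'cont : ∀ x₀ ∈ Ioo c d, ContinuousAt y' x₀ := by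
    intro x₀ hx₀
    set a := (c + x₀)/2 with ha
    set e := (x₀ + d)/2 with he
    have hca : c < a := by simp only [ha]; linarith [hx₀.1]
    have hax : a < x₀ := by simp only [ha]; linarith [hx₀.1]
    have hxe : x₀ < e := by simp only [he]; linarith [hx₀.2]
    have hed : e < d := by simp only [he]; linarith [hx₀.2]
    have hsub : Icc a e ⊆ Ioo c d := fun t ht =>
      ⟨hca.trans_le ht.1, (ht.2.trans_lt hed)⟩
    have hwy_int : IntegrableOn (fun t => -(w t * y t)) (uIcc a e) := by
      rw [uIcc_of_le (hax.trans hxe).le]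
      exact ((hw.mono_set (fun t ht => ⟨(hca.trans_le ht.1).le, (ht.2.trans_lt hed).le⟩)).mul_continuousOn
        (hyc.mono hsub) isCompact_Icc).neg
    have hF : ContinuousOn (fun v => y' a + ∫ t in a..v, -(w t * y t)) (uIcc a e) :=
      continuousOn_const.add (continuousOn_primitive_interval hwy_int)
    rw [uIcc_of_le (hax.trans hxe).le] at hF
    have heq : EqOn y' (fun v => y' a + ∫ t in a..v, -(w t * y t)) (Icc a e) := by
      intro v hv
      have := hy' a (hsub ⟨le_rfl, (hax.trans hxe).le⟩) v (hsub hv)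
      simp only
      linear_combination this
    exact ContinuousOn.continuousAt (hF.congr heq) (Icc_mem_nhds hax hxe)
  have hy'c : ContinuousOn y' (Ioo c d) := fun x hx =>
    (hy'cont x hx).continuousWithinAt
  -- the difference
  set f : ℝ → ℂ := fun x => y x - z x with hf
  set f' : ℝ → ℂ := fun x => y' x - z' x with hf'
  set g : ℝ → ℝ := fun x => ‖f x‖ + ‖f' x‖ with hg
  set φ : ℝ → ℝ := fun t => 1 + ‖w t‖ with hφ
  have hg0 : ∀ x, 0 ≤ g x := fun x => add_nonneg (norm_nonneg _) (norm_nonneg _)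
  have hφ0 : ∀ x, 0 ≤ φ x := fun x => by positivity
  have hφ_int : IntegrableOn φ (Icc c d) := by
    apply Integrable.add
    · exact integrableOn_const measure_Icc_lt_top.ne
    · exact hw.norm
  have hfc : ContinuousOn f (Ioo c d) := hyc.sub (hzc.mono Ioo_subset_Icc_self)
  have hf'c : ContinuousOn f' (Ioo c d) := hy'c.sub (hz'c.mono Ioo_subset_Icc_self)
  have hgc : ContinuousOn g (Ioo c d) := hfc.norm.add hf'c.norm
  have hfderiv : ∀ x ∈ Ioo c d, HasDerivAt f (f' x) x := fun x hx =>
    (hy x hx).sub ((hz x ⟨hx.1.le, hx.2.le⟩).hasDerivAt (Icc_mem_nhds hx.1 hx.2))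
  -- main estimate
  have hineq : ∀ a ∈ Ioo c d, ∀ b ∈ Ioo c d, a ≤ b → g b ≤ g a + ∫ x in a..b, φ x * g x := by
    intro a ha b hb hab
    have hIcc : Icc a b ⊆ Ioo c d := fun t ht => ⟨ha.1.trans_le ht.1, ht.2.trans_lt hb.2⟩
    have huIcc : uIcc a b = Icc a b := uIcc_of_le hab
    have hwIcc : IntegrableOn w (Icc a b) :=
      hw.mono_set (fun t ht => ⟨(ha.1.trans_le ht.1).le, (ht.2.trans_lt hb.2).le⟩)
    have hfIcc : ContinuousOn f (Icc a b) := hfc.mono hIcc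
    have hf'Icc : ContinuousOn f' (Icc a b) := hf'c.mono hIcc
    have hwn : IntegrableOn (fun t => ‖w t‖) (Icc a b) := hwIcc.norm
    -- FTC for f
    have hFTC : f b - f a = ∫ x in a..b, f' x := by
      refine (intervalIntegral.integral_eq_sub_of_hasDerivAt ?_ ?_).symm
      · intro x hx; exact hfderiv x (hIcc (huIcc ▸ hx))
      · exact (intervalIntegrable_iff_integrableOn_Icc_of_le hab).2
          (hf'Icc.integrableOn_Icc)
    have h1 : ‖f b‖ ≤ ‖f a‖ + ∫ x in a..b, ‖f' x‖ := by
      have : ‖f b - f a‖ ≤ ∫ x in a..b, ‖f' x‖ := by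
        rw [hFTC]
        exact intervalIntegral.norm_integral_le_integral_norm hab
      calc ‖f b‖ ≤ ‖f a‖ + ‖f b - f a‖ := by
            have := norm_sub_norm_le (f b) (f a); linarith [norm_sub_rev (f b) (f a) ▸ this]
        _ ≤ ‖f a‖ + ∫ x in a..b, ‖f' x‖ := by linarith
    -- integral identity for f'
    have hf'id : f' b - f' a = ∫ t in a..b, -(w t * f t) := by
      have hyid := hy' a ha b hb
      have hzid := hz' a ⟨ha.1.le, ha.2.le⟩ b ⟨hb.1.le, hb.2.le⟩
      have hsplit : (∫ t in a..b, -(w t * f t)) =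
          (∫ t in a..b, -(w t * y t)) - ∫ t in a..b, -(w t * z t) := by
        rw [← intervalIntegral.integral_sub]
        · congr 1; ext t; simp only [hf]; ring
        · exact (intervalIntegrable_iff_integrableOn_Icc_of_le hab).2
            ((hwIcc.mul_continuousOn (hyc.mono hIcc) isCompact_Icc).neg)
        · exact (intervalIntegrable_iff_integrableOn_Icc_of_le hab).2
            ((hwz_int.mono_set (fun t ht => ⟨(ha.1.trans_le ht.1).le,
              (ht.2.trans_lt hb.2).le⟩)).neg)
      rw [hsplit, ← hyid, ← hzid]; simp only [hf']; ring
    have h2 : ‖f' b‖ ≤ ‖f' a‖ + ∫ x in a..b, ‖w x‖ * ‖f x‖ := by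
      have : ‖f' b - f' a‖ ≤ ∫ x in a..b, ‖w x‖ * ‖f x‖ := by
        rw [hf'id]
        calc ‖∫ t in a..b, -(w t * f t)‖ ≤ ∫ t in a..b, ‖-(w t * f t)‖ :=
              intervalIntegral.norm_integral_le_integral_norm hab
          _ = ∫ t in a..b, ‖w t‖ * ‖f t‖ := by
              congr 1; ext t; rw [norm_neg, norm_mul]
      calc ‖f' b‖ ≤ ‖f' a‖ + ‖f' b - f' a‖ := by
            have := norm_sub_norm_le (f' b) (f' a); linarith
        _ ≤ _ := by linarith
    -- combine
    have hint1 : IntegrableOn (fun x => ‖f' x‖ + ‖w x‖ * ‖f x‖) (Icc a b) :=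
      (hf'Icc.norm.integrableOn_Icc).add
        (hwn.mul_continuousOn hfIcc.norm isCompact_Icc)
    have hint2 : IntegrableOn (fun x => φ x * g x) (Icc a b) := by
      have : (fun x => φ x * g x) = fun x =>
          (‖f x‖ + ‖f' x‖) + (‖w x‖ * ‖f x‖ + ‖w x‖ * ‖f' x‖) := by
        ext x; simp only [hφ, hg]; ring
      rw [this]
      exact ((hfIcc.norm.add hf'Icc.norm).integrableOn_Icc).add
        ((hwn.mul_continuousOn hfIcc.norm isCompact_Icc).add
          (hwn.mul_continuousOn hf'Icc.norm isCompact_Icc))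
    have h3 : (∫ x in a..b, ‖f' x‖ + ‖w x‖ * ‖f x‖) ≤ ∫ x in a..b, φ x * g x := by
      apply intervalIntegral.integral_mono_on hab
      · exact (intervalIntegrable_iff_integrableOn_Icc_of_le hab).2 hint1
      · exact (intervalIntegrable_iff_integrableOn_Icc_of_le hab).2 hint2
      · intro x _
        simp only [hφ, hg]
        have h4 := norm_nonneg (f x)
        have h5 := norm_nonneg (f' x)
        have h6 := norm_nonneg (w x)
        nlinarith
    have h7 : (∫ x in a..b, ‖f' x‖ + ‖w x‖ * ‖f x‖) =
        (∫ x in a..b, ‖f' x‖) + ∫ x in a..b, ‖w x‖ * ‖f x‖ := by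
      apply intervalIntegral.integral_add
      · exact (intervalIntegrable_iff_integrableOn_Icc_of_le hab).2 hf'Icc.norm.integrableOn_Icc
      · exact (intervalIntegrable_iff_integrableOn_Icc_of_le hab).2
          (hwn.mul_continuousOn hfIcc.norm isCompact_Icc)
    simp only [hg]
    linarith
  -- limit of g at c⁺
  have hzlim : Tendsto z (𝓝[>] c) (𝓝 (z c)) := by
    have h1 : Tendsto z (𝓝[Ioc c d] c) (𝓝 (z c)) :=
      (hzc c ⟨le_rfl, hcd.le⟩).mono_left (nhdsWithin_mono _ Ioc_subset_Icc_self)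
    rwa [nhdsWithin_Ioc_eq_nhdsGT hcd] at h1
  have hz'lim : Tendsto z' (𝓝[>] c) (𝓝 (z' c)) := by
    have h1 : Tendsto z' (𝓝[Ioc c d] c) (𝓝 (z' c)) :=
      (hz'c c ⟨le_rfl, hcd.le⟩).mono_left (nhdsWithin_mono _ Ioc_subset_Icc_self)
    rwa [nhdsWithin_Ioc_eq_nhdsGT hcd] at h1
  have hglim : Tendsto g (𝓝[>] c) (𝓝 0) := by
    have hflim : Tendsto f (𝓝[>] c) (𝓝 0) := by
      have := hy0.sub hzlim; rwa [sub_self] at this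
    have hf'lim : Tendsto f' (𝓝[>] c) (𝓝 0) := by
      have := hy0'.sub hz'lim; rwa [sub_self] at this
    have := (hflim.norm).add (hf'lim.norm)
    simpa using this
  -- conclude
  intro x hx
  have hgzero := my_gronwall_zero c x hx.1 φ g
    (hφ_int.mono_set (Icc_subset_Icc le_rfl hx.2.le)) hφ0
    (hgc.mono (fun t ht => ⟨ht.1, ht.2.trans_lt hx.2⟩)) hg0
    (fun a ha b hb hab => by
      have hint2 : IntegrableOn (fun x => φ x * g x) (Icc a b) := by
        have hIcc : Icc a b ⊆ Ioo c d := fun t ht =>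
          ⟨ha.1.trans_le ht.1, ((ht.2.trans hb.2).trans_lt hx.2)⟩
        have hwIcc : IntegrableOn w (Icc a b) := hw.mono_set (fun t ht =>
          ⟨(hIcc ht).1.le, (hIcc ht).2.le⟩)
        have : (fun x => φ x * g x) = fun x =>
            (‖f x‖ + ‖f' x‖) + (‖w x‖ * ‖f x‖ + ‖w x‖ * ‖f' x‖) := by
          ext x; simp only [hφ, hg]; ring
        rw [this]
        have hwn : IntegrableOn (fun t => ‖w t‖) (Icc a b) := hwIcc.norm
        exact (((hfc.mono hIcc).norm.add (hf'c.mono hIcc).norm).integrableOn_Icc).add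
          ((hwn.mul_continuousOn (hfc.mono hIcc).norm isCompact_Icc).add
            (hwn.mul_continuousOn (hf'c.mono hIcc).norm isCompact_Icc))
      exact hint2)
    (fun a ha b hb hab => hineq a ⟨ha.1, ha.2.trans_lt hx.2⟩
      b ⟨hb.1, hb.2.trans_lt hx.2⟩ hab)
    hglim
    x ⟨hx.1, le_rfl⟩
  have h1 : ‖f x‖ = 0 ∧ ‖f' x‖ = 0 := by
    constructor <;> [skip; skip] <;>
      ( have := norm_nonneg (f x); have := norm_nonneg (f' x)
        simp only [hg] at hgzero; linarith )
  exact ⟨sub_eq_zero.1 (norm_eq_zero.1 h1.1), sub_eq_zero.1 (norm_eq_zero.1 h1.2)⟩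

lemma icc_cont (c d : ℝ) (hcd : c ≤ d) (w : ℝ → ℂ) (hw : IntegrableOn w (Icc c d))
    (z z' : ℝ → ℂ)
    (hz : ∀ x ∈ Icc c d, HasDerivWithinAt z (z' x) (Icc c d) x)
    (hz' : ∀ u ∈ Icc c d, ∀ v ∈ Icc c d, z' v - z' u = ∫ t in u..v, -(w t * z t)) :
    ContinuousOn z (Icc c d) ∧ ContinuousOn z' (Icc c d) := by
  have hzc : ContinuousOn z (Icc c d) := fun x hx => (hz x hx).continuousWithinAt
  refine ⟨hzc, ?_⟩
  have hwz_int : IntegrableOn (fun t => w t * z t) (Icc c d) :=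
    hw.mul_continuousOn hzc isCompact_Icc
  have hint : IntegrableOn (fun t => -(w t * z t)) (uIcc c d) := by
    rw [uIcc_of_le hcd]; exact hwz_int.neg
  have hF : ContinuousOn (fun v => z' c + ∫ t in c..v, -(w t * z t)) (Icc c d) := by
    have := continuousOn_primitive_interval hint
    rw [uIcc_of_le hcd] at this
    exact continuousOn_const.add this
  refine hF.congr fun v hv => ?_
  have := hz' c ⟨le_rfl, hcd⟩ v hv
  linear_combination this

lemma unshift (c d : ℝ) (p q : ℝ → ℂ) (ρ : ℂ) (z z' : ℝ → ℂ)
    (h1 : ∀ x ∈ Icc (0:ℝ) (d - c), HasDerivWithinAt z (z' x) (Icc 0 (d-c)) x)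
    (h2 : ∀ u ∈ Icc (0:ℝ) (d-c), ∀ v ∈ Icc (0:ℝ) (d-c), z' v - z' u =
      ∫ t in u..v, -((ρ^2 + ρ * p (t + c) + q (t + c)) * z t)) :
    (∀ x ∈ Icc c d, HasDerivWithinAt (fun x => z (x - c)) (z' (x - c)) (Icc c d) x) ∧
    (∀ u ∈ Icc c d, ∀ v ∈ Icc c d, z' (v - c) - z' (u - c) =
      ∫ t in u..v, -((ρ^2 + ρ * p t + q t) * z (t - c))) := by
  constructor
  · intro x hx
    have hmem : x - c ∈ Icc (0:ℝ) (d - c) := ⟨by linarith [hx.1], by linarith [hx.2]⟩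
    have h3 := h1 (x - c) hmem
    have h4 : HasDerivWithinAt (fun x => x - c) 1 (Icc c d) x :=
      ((hasDerivAt_id x).sub_const c).hasDerivWithinAt
    have hmaps : MapsTo (fun x => x - c) (Icc c d) (Icc (0:ℝ) (d - c)) := by
      intro t ht
      simp only [mem_Icc] at *
      constructor <;> linarith [ht.1, ht.2]
    have h5 := HasDerivWithinAt.scomp_of_eq x h3 h4 hmaps rfl
    rw [one_smul] at h5; exact h5
  · intro u hu v hv
    have humem : u - c ∈ Icc (0:ℝ) (d - c) := ⟨by linarith [hu.1], by linarith [hu.2]⟩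
    have hvmem : v - c ∈ Icc (0:ℝ) (d - c) := ⟨by linarith [hv.1], by linarith [hv.2]⟩
    have h6 := h2 (u - c) humem (v - c) hvmem
    have h7 := intervalIntegral.integral_comp_add_right (a := u - c) (b := v - c)
      (fun t => -((ρ^2 + ρ * p t + q t) * z (t - c))) c
    simp only [add_sub_cancel_right, sub_add_cancel] at h7
    rw [h6, ← h7]

lemma key_interval (N : ℕ) (b : ℕ → ℝ) (p q : ℝ → ℂ) (γ η' η : ℕ → ℂ) (ρ : ℂ)
    (k : ℕ) (hk1 : 1 ≤ k) (hkN : k ≤ N)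
    (hcd : b (k-1) < b k)
    (hw : IntegrableOn (fun t => ρ^2 + ρ * p t + q t) (Icc (b (k-1)) (b k)))
    (Ckf Ckf' Skf Skf' : ℝ → ℂ)
    (hCk : PencilSolOnIcc (fun t => p (t + b (k-1))) (fun t => q (t + b (k-1))) ρ
      Ckf Ckf' 0 (b k - b (k-1)) ∧ Ckf 0 = 1 ∧ Ckf' 0 = 0)
    (hSk : PencilSolOnIcc (fun t => p (t + b (k-1))) (fun t => q (t + b (k-1))) ρ
      Skf Skf' 0 (b k - b (k-1)) ∧ Skf 0 = 0 ∧ Skf' 0 = 1)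
    (Y : JumpSolution N b p q γ η' η ρ) :
    (∀ x ∈ Ioo (b (k-1)) (b k),
      Y.y x = Y.yR (k-1) * Ckf (x - b (k-1)) + Y.yR' (k-1) * Skf (x - b (k-1)) ∧
      Y.y' x = Y.yR (k-1) * Ckf' (x - b (k-1)) + Y.yR' (k-1) * Skf' (x - b (k-1))) ∧
    Y.yL k = Y.yR (k-1) * Ckf (b k - b (k-1)) + Y.yR' (k-1) * Skf (b k - b (k-1)) ∧
    Y.yL' k = Y.yR (k-1) * Ckf' (b k - b (k-1)) + Y.yR' (k-1) * Skf' (b k - b (k-1)) := by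
  set c := b (k-1) with hc
  set d := b k with hd
  set w : ℝ → ℂ := fun t => ρ^2 + ρ * p t + q t with hwdef
  set A := Y.yR (k-1) with hA
  set B := Y.yR' (k-1) with hB
  obtain ⟨hCe, hCe'⟩ := unshift c d p q ρ Ckf Ckf' hCk.1.1 hCk.1.2
  obtain ⟨hSe, hSe'⟩ := unshift c d p q ρ Skf Skf' hSk.1.1 hSk.1.2
  set Ce : ℝ → ℂ := fun x => Ckf (x - c) with hCedef
  set Se : ℝ → ℂ := fun x => Skf (x - c) with hSedef
  have hCec := (icc_cont c d hcd.le w hw Ce (fun x => Ckf' (x - c)) hCe hCe').1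
  have hSec := (icc_cont c d hcd.le w hw Se (fun x => Skf' (x - c)) hSe hSe').1
  set z : ℝ → ℂ := fun x => A * Ce x + B * Se x with hzdef
  set z' : ℝ → ℂ := fun x => A * Ckf' (x - c) + B * Skf' (x - c) with hz'def
  have hz : ∀ x ∈ Icc c d, HasDerivWithinAt z (z' x) (Icc c d) x := fun x hx =>
    ((hCe x hx).const_mul A).add ((hSe x hx).const_mul B)
  have hz' : ∀ u ∈ Icc c d, ∀ v ∈ Icc c d, z' v - z' u = ∫ t in u..v, -(w t * z t) := by
    intro u hu v hv
    have hi1 : IntervalIntegrable (fun t => A * -(w t * Ce t)) volume u v := by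
      apply IntervalIntegrable.const_mul
      apply IntegrableOn.intervalIntegrable
      exact ((hw.mul_continuousOn hCec isCompact_Icc).mono_set (uIcc_subset_Icc hu hv)).neg
    have hi2 : IntervalIntegrable (fun t => B * -(w t * Se t)) volume u v := by
      apply IntervalIntegrable.const_mul
      apply IntegrableOn.intervalIntegrable
      exact ((hw.mul_continuousOn hSec isCompact_Icc).mono_set (uIcc_subset_Icc hu hv)).neg
    have e1 : (∫ t in u..v, -(w t * z t)) =
        (∫ t in u..v, A * -(w t * Ce t)) + ∫ t in u..v, B * -(w t * Se t) := by
      rw [← intervalIntegral.integral_add hi1 hi2]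
      congr 1; ext t; simp only [hzdef]; ring
    rw [e1, intervalIntegral.integral_const_mul, intervalIntegral.integral_const_mul,
      ← hCe' u hu v hv, ← hSe' u hu v hv]
    simp only [hz'def]; ring
  have hy := (Y.solves k hk1 hkN).1
  have hy' := (Y.solves k hk1 hkN).2
  have hk' : (k - 1) + 1 = k := Nat.succ_pred_eq_of_pos hk1
  have hzc : z c = A := by
    simp only [hzdef, hCedef, hSedef, sub_self, hCk.2.1, hSk.2.1]; ring
  have hz'c : z' c = B := by
    simp only [hz'def, sub_self, hCk.2.2, hSk.2.2]; ring
  have hy0 : Tendsto Y.y (𝓝[>] c) (𝓝 (z c)) := by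
    rw [hzc]; exact (hk' ▸ (Y.limR (k-1) (by rw [hk']; exact hkN))).1
  have hy0' : Tendsto Y.y' (𝓝[>] c) (𝓝 (z' c)) := by
    rw [hz'c]; exact (hk' ▸ (Y.limR (k-1) (by rw [hk']; exact hkN))).2
  have huniq := pencil_unique c d hcd w hw Y.y Y.y' z z' hy hy' hz hz' hy0 hy0'
  refine ⟨fun x hx => (huniq x hx), ?_, ?_⟩
  · -- yL k = z d
    have h1 : Tendsto Y.y (𝓝[<] d) (𝓝 (Y.yL k)) := (Y.limL k hk1 hkN).1
    have h2 : Tendsto z (𝓝[<] d) (𝓝 (z d)) := by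
      have := ((icc_cont c d hcd.le w hw z z' hz hz').1 d ⟨hcd.le, le_rfl⟩).mono
        Ioo_subset_Icc_self
      rw [ContinuousWithinAt, nhdsWithin_Ioo_eq_nhdsLT hcd] at this
      exact this
    have h3 : Tendsto Y.y (𝓝[<] d) (𝓝 (z d)) := by
      refine h2.congr' ?_
      filter_upwards [Ioo_mem_nhdsLT_of_mem (⟨hcd, le_rfl⟩ : d ∈ Ioc c d)] with x hx
      exact ((huniq x hx).1).symm
    exact tendsto_nhds_unique h1 h3
  · have h1 : Tendsto Y.y' (𝓝[<] d) (𝓝 (Y.yL' k)) := (Y.limL k hk1 hkN).2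
    have h2 : Tendsto z' (𝓝[<] d) (𝓝 (z' d)) := by
      have := ((icc_cont c d hcd.le w hw z z' hz hz').2 d ⟨hcd.le, le_rfl⟩).mono
        Ioo_subset_Icc_self
      rw [ContinuousWithinAt, nhdsWithin_Ioo_eq_nhdsLT hcd] at this
      exact this
    have h3 : Tendsto Y.y' (𝓝[<] d) (𝓝 (z' d)) := by
      refine h2.congr' ?_
      filter_upwards [Ioo_mem_nhdsLT_of_mem (⟨hcd, le_rfl⟩ : d ∈ Ioc c d)] with x hx
      exact ((huniq x hx).2).symm
    exact tendsto_nhds_unique h1 h3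

lemma my_amalg {P : ℕ → ℝ → Prop} (N : ℕ)
    (hmono : ∀ k (K K' : ℝ), K ≤ K' → P k K → P k K')
    (h : ∀ k, 1 ≤ k → k ≤ N → ∃ K, P k K) :
    ∃ K : ℝ, 1 ≤ K ∧ ∀ k, 1 ≤ k → k ≤ N → P k K := by
  induction N with
  | zero => exact ⟨1, le_rfl, fun k hk1 hk0 => absurd (hk1.trans hk0) (by norm_num)⟩
  | succ n ih =>
    obtain ⟨K, hK1, hK⟩ := ih (fun k hk1 hkn => h k hk1 (hkn.trans (Nat.le_succ n)))
    obtain ⟨K', hK'⟩ := h (n+1) (Nat.succ_le_succ (Nat.zero_le n)) le_rfl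
    refine ⟨max K K', le_trans hK1 (le_max_left _ _), fun k hk1 hkn => ?_⟩
    rcases Nat.lt_or_ge k (n+1) with h' | h'
    · exact hmono k K _ (le_max_left _ _) (hK k hk1 (Nat.lt_succ_iff.1 h'))
    · have hkeq : k = n + 1 := le_antisymm hkn h'
      exact hmono k K' _ (le_max_right _ _) (hkeq ▸ hK')

lemma abs_comb_le (A B Cv Sv : ℂ) (a bb cv sv : ℝ)
    (hA : ‖A‖ ≤ a) (hB : ‖B‖ ≤ bb)
    (hC : ‖Cv‖ ≤ cv) (hS : ‖Sv‖ ≤ sv) :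
    ‖A * Cv + B * Sv‖ ≤ a * cv + bb * sv := by
  calc ‖A * Cv + B * Sv‖
      ≤ ‖A * Cv‖ + ‖B * Sv‖ := norm_add_le _ _
    _ = ‖A‖ * ‖Cv‖ + ‖B‖ * ‖Sv‖ := by
        rw [norm_mul, norm_mul]
    _ ≤ a * cv + bb * sv :=
        add_le_add
          (mul_le_mul hA hC (norm_nonneg _) ((norm_nonneg _).trans hA))
          (mul_le_mul hB hS (norm_nonneg _) ((norm_nonneg _).trans hB))


/-- If for each `k = 1, …, N` there is a constant `K > 0` such that
for all `x_k ∈ [0, T_k]`, `|ρ| ≥ 1` and `ν = 0, 1` one has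
`|S_k^{(ν)}(x_k,ρ)| ≤ K |ρ|^{ν-1} e^{|Im ρ| x_k}` and
`|C_k^{(ν)}(x_k,ρ)| ≤ K |ρ|^{ν} e^{|Im ρ| x_k}`, then there is a constant `K > 0`
such that for all `x ∈ [0,T] \ {b 1, …, b (N-1)}`, `|ρ| ≥ 1` and `ν = 0, 1`:
`|S^{(ν)}(x,ρ)| ≤ K |ρ|^{ν-1} e^{|Im ρ| x}` and `|C^{(ν)}(x,ρ)| ≤ K |ρ|^{ν} e^{|Im ρ| x}`. -/
theorem S_C_standard_estimates
    (T : ℝ) (N : ℕ) (b : ℕ → ℝ) (p q : ℝ → ℂ) (γ η' η : ℕ → ℂ)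
    (hT : 0 < T) (hN : 1 ≤ N) (hb0 : b 0 = 0) (hbN : b N = T)
    (hb : ∀ j, j < N → b j < b (j + 1))
    (hγ : ∀ j, 1 ≤ j → j + 1 ≤ N → γ j ≠ 0)
    (hp : AbsCont p 0 T) (hq : MeasureTheory.IntegrableOn q (Set.Icc 0 T))
    (SS CC : ∀ ρ : ℂ, JumpSolution N b p q γ η' η ρ)
    (hS : ∀ ρ, (SS ρ).yR 0 = 0 ∧ (SS ρ).yR' 0 = 1)
    (hC : ∀ ρ, (CC ρ).yR 0 = 1 ∧ (CC ρ).yR' 0 = 0)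
    (Sk Sk' Ck Ck' : ℕ → ℝ → ℂ → ℂ)
    (hSk : ∀ k, 1 ≤ k → k ≤ N → ∀ ρ : ℂ,
      PencilSolOnIcc (fun t => p (t + b (k - 1))) (fun t => q (t + b (k - 1))) ρ
        (fun x => Sk k x ρ) (fun x => Sk' k x ρ) 0 (b k - b (k - 1)) ∧
      Sk k 0 ρ = 0 ∧ Sk' k 0 ρ = 1)
    (hCk : ∀ k, 1 ≤ k → k ≤ N → ∀ ρ : ℂ,
      PencilSolOnIcc (fun t => p (t + b (k - 1))) (fun t => q (t + b (k - 1))) ρ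
        (fun x => Ck k x ρ) (fun x => Ck' k x ρ) 0 (b k - b (k - 1)) ∧
      Ck k 0 ρ = 1 ∧ Ck' k 0 ρ = 0)
    (hEst : ∀ k, 1 ≤ k → k ≤ N → ∃ K : ℝ, 0 < K ∧
      ∀ x ∈ Set.Icc (0 : ℝ) (b k - b (k - 1)), ∀ ρ : ℂ, 1 ≤ ‖ρ‖ →
        ‖Sk k x ρ‖ ≤ K * (‖ρ‖)⁻¹ * Real.exp (|ρ.im| * x) ∧
        ‖Sk' k x ρ‖ ≤ K * Real.exp (|ρ.im| * x) ∧
        ‖Ck k x ρ‖ ≤ K * Real.exp (|ρ.im| * x) ∧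
        ‖Ck' k x ρ‖ ≤ K * ‖ρ‖ * Real.exp (|ρ.im| * x)) :
    ∃ K : ℝ, 0 < K ∧
      ∀ x ∈ Set.Icc (0 : ℝ) T, (∀ j, 1 ≤ j → j + 1 ≤ N → x ≠ b j) →
        ∀ ρ : ℂ, 1 ≤ ‖ρ‖ →
          ‖(SS ρ).y x‖ ≤ K * (‖ρ‖)⁻¹ * Real.exp (|ρ.im| * x) ∧
          ‖(SS ρ).y' x‖ ≤ K * Real.exp (|ρ.im| * x) ∧
          ‖(CC ρ).y x‖ ≤ K * Real.exp (|ρ.im| * x) ∧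
          ‖(CC ρ).y' x‖ ≤ K * ‖ρ‖ * Real.exp (|ρ.im| * x) := by
  -- monotonicity of the nodes
  have hbmono : ∀ i j : ℕ, i ≤ j → j ≤ N → b i ≤ b j := by
    intro i j hij hjN
    induction j with
    | zero =>
      have : i = 0 := Nat.le_zero.1 hij
      rw [this]
    | succ n ihn =>
      rcases Nat.lt_or_ge i (n+1) with h | h
      · exact le_trans (ihn (Nat.lt_succ_iff.1 h) (le_trans (Nat.le_succ n) hjN))
          (hb n (Nat.lt_of_succ_le hjN)).le
      · have : i = n + 1 := le_antisymm hij h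
        rw [this]
  have hbIcc : ∀ j, j ≤ N → b j ∈ Set.Icc (0:ℝ) T := fun j hj =>
    ⟨hb0 ▸ hbmono 0 j (Nat.zero_le j) hj, hbN ▸ hbmono j N hj le_rfl⟩
  have hcd : ∀ k, 1 ≤ k → k ≤ N → b (k-1) < b k := by
    intro k hk1 hkN
    have h := hb (k-1) (by omega)
    have h2 : k - 1 + 1 = k := by omega
    rwa [h2] at h
  -- p is continuous on [0, T]
  have hpc : ContinuousOn p (Icc 0 T) := by
    obtain ⟨p', hp'int, hp'eq⟩ := hp
    have hint : IntegrableOn p' (uIcc 0 T) := by rw [uIcc_of_le hT.le]; exact hp'int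
    have h2 := continuousOn_primitive_interval hint
    rw [uIcc_of_le hT.le] at h2
    exact (continuousOn_const.add h2).congr fun x hx => hp'eq x hx
  -- integrability of the potential on each subinterval
  have hwint : ∀ ρ : ℂ, ∀ k, 1 ≤ k → k ≤ N →
      IntegrableOn (fun t => ρ^2 + ρ * p t + q t) (Icc (b (k-1)) (b k)) := by
    intro ρ k hk1 hkN
    have hsub : Icc (b (k-1)) (b k) ⊆ Icc 0 T :=
      Icc_subset_Icc (hbIcc (k-1) (le_trans (Nat.sub_le k 1) hkN)).1 (hbIcc k hkN).2
    have h1 : IntegrableOn (fun _ : ℝ => (ρ^2 : ℂ)) (Icc (b (k-1)) (b k)) :=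
      integrableOn_const measure_Icc_lt_top.ne
    have h2 : IntegrableOn (fun t => ρ * p t) (Icc (b (k-1)) (b k)) :=
      (continuousOn_const.mul (hpc.mono hsub)).integrableOn_Icc
    exact (h1.add h2).add (hq.mono_set hsub)
  -- amalgamated basis estimates
  obtain ⟨KK, hKK1, hKK⟩ : ∃ K : ℝ, 1 ≤ K ∧ ∀ k, 1 ≤ k → k ≤ N →
      ∀ x ∈ Set.Icc (0:ℝ) (b k - b (k-1)), ∀ ρ : ℂ, 1 ≤ ‖ρ‖ →
        ‖Sk k x ρ‖ ≤ K * (‖ρ‖)⁻¹ * Real.exp (|ρ.im| * x) ∧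
        ‖Sk' k x ρ‖ ≤ K * Real.exp (|ρ.im| * x) ∧
        ‖Ck k x ρ‖ ≤ K * Real.exp (|ρ.im| * x) ∧
        ‖Ck' k x ρ‖ ≤ K * ‖ρ‖ * Real.exp (|ρ.im| * x) := by
    apply my_amalg
    · intro k K K' hKle hP x hx ρ hρ
      obtain ⟨h1, h2, h3, h4⟩ := hP x hx ρ hρ
      have hr : (0:ℝ) ≤ (‖ρ‖)⁻¹ := by positivity
      have he : (0:ℝ) ≤ Real.exp (|ρ.im| * x) := (Real.exp_pos _).le
      have hra : (0:ℝ) ≤ ‖ρ‖ := norm_nonneg ρ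
      refine ⟨le_trans h1 ?_, le_trans h2 ?_, le_trans h3 ?_, le_trans h4 ?_⟩
      · have : K * (‖ρ‖)⁻¹ * Real.exp (|ρ.im| * x)
            ≤ K' * (‖ρ‖)⁻¹ * Real.exp (|ρ.im| * x) := by
          apply mul_le_mul_of_nonneg_right (mul_le_mul_of_nonneg_right hKle hr) he
        exact this
      · exact mul_le_mul_of_nonneg_right hKle he
      · exact mul_le_mul_of_nonneg_right hKle he
      · exact mul_le_mul_of_nonneg_right (mul_le_mul_of_nonneg_right hKle hra) he
    · intro k hk1 hkN
      obtain ⟨K, _, hK⟩ := hEst k hk1 hkN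
      exact ⟨K, hK⟩
  -- amalgamated jump constants
  obtain ⟨G, hG1, hG⟩ : ∃ G : ℝ, 1 ≤ G ∧ ∀ j, 1 ≤ j → j + 1 ≤ N →
      ‖γ j‖ ≤ G ∧ ‖(γ j)⁻¹‖ ≤ G ∧
      ‖η' j‖ + ‖η j‖ ≤ G := by
    obtain ⟨G, hG1, hG⟩ := my_amalg (P := fun j G =>
        ‖γ j‖ ≤ G ∧ ‖(γ j)⁻¹‖ ≤ G ∧
        ‖η' j‖ + ‖η j‖ ≤ G) (N - 1)
      (fun k K K' hKle hP => ⟨hP.1.trans hKle, hP.2.1.trans hKle, hP.2.2.trans hKle⟩)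
      (fun j hj1 hjN => ⟨‖γ j‖ + ‖(γ j)⁻¹‖ +
          (‖η' j‖ + ‖η j‖), by
        refine ⟨?_, ?_, ?_⟩ <;>
          · have h1 := norm_nonneg (γ j)
            have h2 := norm_nonneg ((γ j)⁻¹)
            have h3 := norm_nonneg (η' j)
            have h4 := norm_nonneg (η j)
            linarith⟩)
    exact ⟨G, hG1, fun j hj1 hjN => hG j hj1 (by omega)⟩
  set M : ℝ := 4 * KK * G with hMdef
  have hM1 : (1:ℝ) ≤ M := by nlinarith
  have hM0 : (0:ℝ) < M := lt_of_lt_of_le one_pos hM1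
  -- the key structural result on each interval
  have key : ∀ k, 1 ≤ k → k ≤ N → ∀ ρ : ℂ, ∀ Y : JumpSolution N b p q γ η' η ρ,
      (∀ x ∈ Ioo (b (k-1)) (b k),
        Y.y x = Y.yR (k-1) * Ck k (x - b (k-1)) ρ + Y.yR' (k-1) * Sk k (x - b (k-1)) ρ ∧
        Y.y' x = Y.yR (k-1) * Ck' k (x - b (k-1)) ρ + Y.yR' (k-1) * Sk' k (x - b (k-1)) ρ) ∧
      Y.yL k = Y.yR (k-1) * Ck k (b k - b (k-1)) ρ + Y.yR' (k-1) * Sk k (b k - b (k-1)) ρ ∧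
      Y.yL' k = Y.yR (k-1) * Ck' k (b k - b (k-1)) ρ + Y.yR' (k-1) * Sk' k (b k - b (k-1)) ρ := by
    intro k hk1 hkN ρ Y
    exact key_interval N b p q γ η' η ρ k hk1 hkN (hcd k hk1 hkN) (hwint ρ k hk1 hkN)
      (fun x => Ck k x ρ) (fun x => Ck' k x ρ) (fun x => Sk k x ρ) (fun x => Sk' k x ρ)
      (hCk k hk1 hkN ρ) (hSk k hk1 hkN ρ) Y
  -- node estimates, by induction
  have node : ∀ j, j + 1 ≤ N → ∀ ρ : ℂ, 1 ≤ ‖ρ‖ →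
      ‖(SS ρ).yR j‖ ≤ M^(j+1) * (‖ρ‖)⁻¹ * Real.exp (|ρ.im| * b j) ∧
      ‖(SS ρ).yR' j‖ ≤ M^(j+1) * Real.exp (|ρ.im| * b j) ∧
      ‖(CC ρ).yR j‖ ≤ M^(j+1) * Real.exp (|ρ.im| * b j) ∧
      ‖(CC ρ).yR' j‖ ≤ M^(j+1) * ‖ρ‖ * Real.exp (|ρ.im| * b j) := by
    intro j
    induction j with
    | zero =>
      intro _ ρ hρ
      rw [hb0, mul_zero, Real.exp_zero, pow_one]
      rw [(hS ρ).1, (hS ρ).2, (hC ρ).1, (hC ρ).2]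
      simp only [norm_zero, norm_one, mul_one]
      have hr : (0:ℝ) ≤ (‖ρ‖)⁻¹ := by positivity
      have hra : (1:ℝ) ≤ ‖ρ‖ := hρ
      refine ⟨by positivity, hM1, hM1, by positivity⟩
    | succ j ih =>
      intro hjN ρ hρ
      have hih := ih (by omega) ρ hρ
      obtain ⟨ihS, ihS', ihC, ihC'⟩ := hih
      have hkeyS := key (j+1) (by omega) (by omega) ρ (SS ρ)
      have hkeyC := key (j+1) (by omega) (by omega) ρ (CC ρ)
      simp only [Nat.add_sub_cancel] at hkeyS hkeyC
      set r := ‖ρ‖ with hrdef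
      have hr0 : (0:ℝ) < r := lt_of_lt_of_le one_pos hρ
      have hrinv0 : (0:ℝ) ≤ r⁻¹ := by positivity
      have hrinv1 : r⁻¹ ≤ 1 := by
        rw [inv_le_one_iff₀]; right; exact hρ
      have hrr : r * r⁻¹ = 1 := mul_inv_cancel₀ (ne_of_gt hr0)
      set e1 := Real.exp (|ρ.im| * b j) with he1def
      set e2 := Real.exp (|ρ.im| * (b (j+1) - b j)) with he2def
      set E := Real.exp (|ρ.im| * b (j+1)) with hEdef
      have hE : e1 * e2 = E := by
        rw [he1def, he2def, hEdef, ← Real.exp_add]; congr 1; ring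
      have he1 : (0:ℝ) < e1 := Real.exp_pos _
      have he2 : (0:ℝ) < e2 := Real.exp_pos _
      have hE0 : (0:ℝ) < E := Real.exp_pos _
      have hKK0 : (0:ℝ) < KK := lt_of_lt_of_le one_pos hKK1
      have hG0 : (0:ℝ) < G := lt_of_lt_of_le one_pos hG1
      have hMj : (0:ℝ) < M^(j+1) := pow_pos hM0 _
      -- basis bounds at the right endpoint
      have hTk : b (j+1) - b j ∈ Set.Icc (0:ℝ) (b (j+1) - b j) := by
        constructor
        · have := hcd (j+1) (by omega) (by omega)
          simp only [Nat.add_sub_cancel] at this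
          linarith
        · exact le_refl _
      have hest := hKK (j+1) (by omega) (by omega) (b (j+1) - b j)
        (by simpa only [Nat.add_sub_cancel] using hTk) ρ hρ
      obtain ⟨hbS, hbS', hbC, hbC'⟩ := hest
      -- bounds on yL (j+1), yL' (j+1) for SS
      have hyLS : ‖(SS ρ).yL (j+1)‖ ≤ 2 * KK * M^(j+1) * r⁻¹ * E := by
        rw [hkeyS.2.1]
        calc ‖_‖ ≤ (M^(j+1) * r⁻¹ * e1) * (KK * e2) +
            (M^(j+1) * e1) * (KK * r⁻¹ * e2) :=
              abs_comb_le _ _ _ _ _ _ _ _ ihS ihS' hbC hbS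
          _ = 2 * KK * M^(j+1) * r⁻¹ * (e1 * e2) := by ring
          _ = 2 * KK * M^(j+1) * r⁻¹ * E := by rw [hE]
      have hyLS' : ‖(SS ρ).yL' (j+1)‖ ≤ 2 * KK * M^(j+1) * E := by
        rw [hkeyS.2.2]
        calc ‖_‖ ≤ (M^(j+1) * r⁻¹ * e1) * (KK * r * e2) +
            (M^(j+1) * e1) * (KK * e2) :=
              abs_comb_le _ _ _ _ _ _ _ _ ihS ihS' hbC' hbS'
          _ = KK * M^(j+1) * (r * r⁻¹) * (e1 * e2) + KK * M^(j+1) * (e1 * e2) := by ring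
          _ = 2 * KK * M^(j+1) * E := by rw [hrr, hE]; ring
      have hyLC : ‖(CC ρ).yL (j+1)‖ ≤ 2 * KK * M^(j+1) * E := by
        rw [hkeyC.2.1]
        calc ‖_‖ ≤ (M^(j+1) * e1) * (KK * e2) +
            (M^(j+1) * r * e1) * (KK * r⁻¹ * e2) :=
              abs_comb_le _ _ _ _ _ _ _ _ ihC ihC' hbC hbS
          _ = KK * M^(j+1) * (e1 * e2) + KK * M^(j+1) * (r * r⁻¹) * (e1 * e2) := by ring
          _ = 2 * KK * M^(j+1) * E := by rw [hrr, hE]; ring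
      have hyLC' : ‖(CC ρ).yL' (j+1)‖ ≤ 2 * KK * M^(j+1) * r * E := by
        rw [hkeyC.2.2]
        calc ‖_‖ ≤ (M^(j+1) * e1) * (KK * r * e2) +
            (M^(j+1) * r * e1) * (KK * e2) :=
              abs_comb_le _ _ _ _ _ _ _ _ ihC ihC' hbC' hbS'
          _ = 2 * KK * M^(j+1) * r * (e1 * e2) := by ring
          _ = 2 * KK * M^(j+1) * r * E := by rw [hE]
      -- jump conditions at node j+1
      obtain ⟨hγS, hγS'⟩ := (SS ρ).jump (j+1) (by omega) (by omega)
      obtain ⟨hγC, hγC'⟩ := (CC ρ).jump (j+1) (by omega) (by omega)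
      obtain ⟨hGγ, hGγi, hGη⟩ := hG (j+1) (by omega) (by omega)
      have hjmp : ‖Complex.I * ρ * η' (j+1) + η (j+1)‖ ≤ r * G := by
        calc ‖Complex.I * ρ * η' (j+1) + η (j+1)‖
            ≤ ‖Complex.I * ρ * η' (j+1)‖ + ‖η (j+1)‖ :=
              norm_add_le _ _
          _ = r * ‖η' (j+1)‖ + ‖η (j+1)‖ := by
              rw [norm_mul, norm_mul, Complex.norm_I, one_mul]
          _ ≤ r * ‖η' (j+1)‖ + r * ‖η (j+1)‖ := by
              have := norm_nonneg (η (j+1))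
              nlinarith
          _ = r * (‖η' (j+1)‖ + ‖η (j+1)‖) := by ring
          _ ≤ r * G := by
              apply mul_le_mul_of_nonneg_left hGη (le_of_lt hr0)
      have hpow : M^(j+1+1) = M * M^(j+1) := by ring
      refine ⟨?_, ?_, ?_, ?_⟩
      · -- S.yR (j+1)
        rw [hγS]
        calc ‖γ (j+1) * (SS ρ).yL (j+1)‖
            = ‖γ (j+1)‖ * ‖(SS ρ).yL (j+1)‖ := norm_mul _ _
          _ ≤ G * (2 * KK * M^(j+1) * r⁻¹ * E) := by
              apply mul_le_mul hGγ hyLS (norm_nonneg _) (by linarith)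
          _ = (2 * (KK * G * M^(j+1))) * (r⁻¹ * E) := by ring
          _ ≤ (4 * (KK * G * M^(j+1))) * (r⁻¹ * E) := by
              have hKGM : (0:ℝ) < KK * G * M^(j+1) := mul_pos (mul_pos hKK0 hG0) hMj
              exact mul_le_mul_of_nonneg_right (by linarith) (mul_nonneg hrinv0 hE0.le)
          _ = M^(j+1+1) * r⁻¹ * E := by rw [pow_succ, hMdef]; ring
      · -- S.yR' (j+1)
        rw [hγS']
        calc ‖(γ (j+1))⁻¹ * (SS ρ).yL' (j+1) +
              (Complex.I * ρ * η' (j+1) + η (j+1)) * (SS ρ).yL (j+1)‖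
            ≤ G * (2 * KK * M^(j+1) * E) + (r * G) * (2 * KK * M^(j+1) * r⁻¹ * E) :=
              abs_comb_le _ _ _ _ _ _ _ _ hGγi hjmp hyLS' hyLS
          _ = 2 * KK * G * M^(j+1) * E + 2 * KK * G * M^(j+1) * (r * r⁻¹) * E := by ring
          _ = 4 * KK * G * M^(j+1) * E := by rw [hrr]; ring
          _ = M^(j+1+1) * E := by rw [pow_succ, hMdef]; ring
      · -- C.yR (j+1)
        rw [hγC]
        calc ‖γ (j+1) * (CC ρ).yL (j+1)‖
            = ‖γ (j+1)‖ * ‖(CC ρ).yL (j+1)‖ := norm_mul _ _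
          _ ≤ G * (2 * KK * M^(j+1) * E) := by
              apply mul_le_mul hGγ hyLC (norm_nonneg _) (by linarith)
          _ = (2 * (KK * G * M^(j+1))) * E := by ring
          _ ≤ (4 * (KK * G * M^(j+1))) * E := by
              have hKGM : (0:ℝ) < KK * G * M^(j+1) := mul_pos (mul_pos hKK0 hG0) hMj
              exact mul_le_mul_of_nonneg_right (by linarith) hE0.le
          _ = M^(j+1+1) * E := by rw [pow_succ, hMdef]; ring
      · -- C.yR' (j+1)
        rw [hγC']
        calc ‖(γ (j+1))⁻¹ * (CC ρ).yL' (j+1) +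
              (Complex.I * ρ * η' (j+1) + η (j+1)) * (CC ρ).yL (j+1)‖
            ≤ G * (2 * KK * M^(j+1) * r * E) + (r * G) * (2 * KK * M^(j+1) * E) :=
              abs_comb_le _ _ _ _ _ _ _ _ hGγi hjmp hyLC' hyLC
          _ = 4 * KK * G * M^(j+1) * r * E := by ring
          _ = M^(j+1+1) * r * E := by rw [pow_succ, hMdef]; ring
  -- final constant
  have hKK0 : (0:ℝ) < KK := lt_of_lt_of_le one_pos hKK1
  have hMN : (0:ℝ) < M^(N+1) := pow_pos hM0 _
  refine ⟨2 * KK * M^(N+1), by nlinarith, ?_⟩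
  intro x hx hnot ρ hρ
  set r := ‖ρ‖ with hrdef
  have hr0 : (0:ℝ) < r := lt_of_lt_of_le one_pos hρ
  have hrinv0 : (0:ℝ) ≤ r⁻¹ := by positivity
  have hrr : r * r⁻¹ = 1 := mul_inv_cancel₀ (ne_of_gt hr0)
  rcases eq_or_lt_of_le hx.1 with hx0 | hx0
  · -- x = 0 = b 0
    have hxb0 : x = b 0 := by rw [hb0]; exact hx0.symm
    rw [hxb0, (SS ρ).left_end.1, (SS ρ).left_end.2, (CC ρ).left_end.1, (CC ρ).left_end.2,
      (hS ρ).1, (hS ρ).2, (hC ρ).1, (hC ρ).2, hb0, mul_zero, Real.exp_zero]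
    have hMN1 : (1:ℝ) ≤ M^(N+1) := one_le_pow₀ hM1
    have h2KK : (1:ℝ) ≤ 2 * KK * M^(N+1) := by nlinarith
    simp only [norm_zero, norm_one, mul_one]
    refine ⟨?_, h2KK, h2KK, ?_⟩
    · exact mul_nonneg (by nlinarith) hrinv0
    · exact mul_nonneg (by nlinarith) hr0.le
  · -- 0 < x : locate the interval
    set j := Nat.findGreatest (fun i => b i < x) N with hjdef
    have hPj : b j < x := by
      have h := Nat.findGreatest_spec (P := fun i => b i < x) (Nat.zero_le N)
        (show b 0 < x by rw [hb0]; exact hx0)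
      exact h
    have hjN : j ≤ N := Nat.findGreatest_le N
    have hjlt : j < N := by
      rcases eq_or_lt_of_le hjN with h | h
      · exfalso
        rw [h] at hPj
        rw [hbN] at hPj
        linarith [hx.2]
      · exact h
    have hxle : x ≤ b (j+1) := by
      by_contra hcon
      push_neg at hcon
      have h2 := Nat.le_findGreatest (P := fun i => b i < x) (show j+1 ≤ N from hjlt) hcon
      rw [← hjdef] at h2
      omega
    -- the formulas for y and y' at x
    have hkeyS := key (j+1) (by omega) (by omega) ρ (SS ρ)
    have hkeyC := key (j+1) (by omega) (by omega) ρ (CC ρ)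
    simp only [Nat.add_sub_cancel] at hkeyS hkeyC
    have hform :
        (SS ρ).y x = (SS ρ).yR j * Ck (j+1) (x - b j) ρ + (SS ρ).yR' j * Sk (j+1) (x - b j) ρ ∧
        (SS ρ).y' x = (SS ρ).yR j * Ck' (j+1) (x - b j) ρ + (SS ρ).yR' j * Sk' (j+1) (x - b j) ρ ∧
        (CC ρ).y x = (CC ρ).yR j * Ck (j+1) (x - b j) ρ + (CC ρ).yR' j * Sk (j+1) (x - b j) ρ ∧
        (CC ρ).y' x = (CC ρ).yR j * Ck' (j+1) (x - b j) ρ + (CC ρ).yR' j * Sk' (j+1) (x - b j) ρ := by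
      rcases eq_or_lt_of_le hxle with hxeq | hxlt
      · -- x = b (j+1), so j + 1 = N and use yL N with right_end
        have hjN1 : j + 1 = N := by
          by_contra hne
          exact (hnot (j+1) (by omega) (by omega)) hxeq
        have hxbN : x = b N := by rw [hxeq, hjN1]
        have e1 : (SS ρ).y x = (SS ρ).yL (j+1) := by
          rw [hxbN, (SS ρ).right_end.1, hjN1]
        have e2 : (SS ρ).y' x = (SS ρ).yL' (j+1) := by
          rw [hxbN, (SS ρ).right_end.2, hjN1]
        have e3 : (CC ρ).y x = (CC ρ).yL (j+1) := by
          rw [hxbN, (CC ρ).right_end.1, hjN1]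
        have e4 : (CC ρ).y' x = (CC ρ).yL' (j+1) := by
          rw [hxbN, (CC ρ).right_end.2, hjN1]
        rw [e1, e2, e3, e4, hkeyS.2.1, hkeyS.2.2, hkeyC.2.1, hkeyC.2.2, ← hxeq]
        exact ⟨rfl, rfl, rfl, rfl⟩
      · have hmem : x ∈ Ioo (b j) (b (j+1)) := ⟨hPj, hxlt⟩
        exact ⟨(hkeyS.1 x hmem).1, (hkeyS.1 x hmem).2,
          (hkeyC.1 x hmem).1, (hkeyC.1 x hmem).2⟩
    -- estimates
    have hnode := node j (by omega) ρ hρ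
    obtain ⟨ihS, ihS', ihC, ihC'⟩ := hnode
    set e1 := Real.exp (|ρ.im| * b j) with he1def
    set e2 := Real.exp (|ρ.im| * (x - b j)) with he2def
    set E := Real.exp (|ρ.im| * x) with hEdef
    have hE : e1 * e2 = E := by
      rw [he1def, he2def, hEdef, ← Real.exp_add]; congr 1; ring
    have he1 : (0:ℝ) < e1 := Real.exp_pos _
    have he2 : (0:ℝ) < e2 := Real.exp_pos _
    have hE0 : (0:ℝ) < E := Real.exp_pos _
    have hxmem : x - b j ∈ Set.Icc (0:ℝ) (b (j+1) - b j) :=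
      ⟨by linarith, by linarith⟩
    have hest := hKK (j+1) (by omega) (by omega) (x - b j)
      (by simpa only [Nat.add_sub_cancel] using hxmem) ρ hρ
    obtain ⟨hbS, hbS', hbC, hbC'⟩ := hest
    have hMjle : M^(j+1) ≤ M^(N+1) := pow_le_pow_right₀ hM1 (by omega)
    have hMj : (0:ℝ) < M^(j+1) := pow_pos hM0 _
    refine ⟨?_, ?_, ?_, ?_⟩
    · rw [hform.1]
      calc ‖_‖ ≤ (M^(j+1) * r⁻¹ * e1) * (KK * e2) +
          (M^(j+1) * e1) * (KK * r⁻¹ * e2) :=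
            abs_comb_le _ _ _ _ _ _ _ _ ihS ihS' hbC hbS
        _ = 2 * KK * M^(j+1) * r⁻¹ * (e1 * e2) := by ring
        _ = 2 * KK * M^(j+1) * r⁻¹ * E := by rw [hE]
        _ = (2 * KK * M^(j+1)) * (r⁻¹ * E) := by ring
        _ ≤ (2 * KK * M^(N+1)) * (r⁻¹ * E) :=
            mul_le_mul_of_nonneg_right
              (mul_le_mul_of_nonneg_left hMjle (by linarith : (0:ℝ) ≤ 2 * KK))
              (mul_nonneg hrinv0 hE0.le)
        _ = 2 * KK * M^(N+1) * r⁻¹ * E := by ring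
    · rw [hform.2.1]
      calc ‖_‖ ≤ (M^(j+1) * r⁻¹ * e1) * (KK * r * e2) +
          (M^(j+1) * e1) * (KK * e2) :=
            abs_comb_le _ _ _ _ _ _ _ _ ihS ihS' hbC' hbS'
        _ = KK * M^(j+1) * (r * r⁻¹) * (e1 * e2) + KK * M^(j+1) * (e1 * e2) := by ring
        _ = 2 * KK * M^(j+1) * E := by rw [hrr, hE]; ring
        _ ≤ 2 * KK * M^(N+1) * E :=
            mul_le_mul_of_nonneg_right
              (mul_le_mul_of_nonneg_left hMjle (by linarith : (0:ℝ) ≤ 2 * KK)) hE0.le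
    · rw [hform.2.2.1]
      calc ‖_‖ ≤ (M^(j+1) * e1) * (KK * e2) +
          (M^(j+1) * r * e1) * (KK * r⁻¹ * e2) :=
            abs_comb_le _ _ _ _ _ _ _ _ ihC ihC' hbC hbS
        _ = KK * M^(j+1) * (e1 * e2) + KK * M^(j+1) * (r * r⁻¹) * (e1 * e2) := by ring
        _ = 2 * KK * M^(j+1) * E := by rw [hrr, hE]; ring
        _ ≤ 2 * KK * M^(N+1) * E :=
            mul_le_mul_of_nonneg_right
              (mul_le_mul_of_nonneg_left hMjle (by linarith : (0:ℝ) ≤ 2 * KK)) hE0.le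
    · rw [hform.2.2.2]
      calc ‖_‖ ≤ (M^(j+1) * e1) * (KK * r * e2) +
          (M^(j+1) * r * e1) * (KK * e2) :=
            abs_comb_le _ _ _ _ _ _ _ _ ihC ihC' hbC' hbS'
        _ = 2 * KK * M^(j+1) * r * (e1 * e2) := by ring
        _ = 2 * KK * M^(j+1) * r * E := by rw [hE]
        _ = (2 * KK * M^(j+1)) * (r * E) := by ring
        _ ≤ (2 * KK * M^(N+1)) * (r * E) :=
            mul_le_mul_of_nonneg_right
              (mul_le_mul_of_nonneg_left hMjle (by linarith : (0:ℝ) ≤ 2 * KK))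
              (mul_nonneg hr0.le hE0.le)
        _ = 2 * KK * M^(N+1) * r * E := by ring
end
end
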